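/- arXiv:2503.10816 — 12 statements merged into one kernel-verified Lean document; each statement's English description precedes it below -/
import Mathlib

section
/- Every i-monoid satisfying left-divisibility x*y = x*(x'+y) is locally-complemented, i.e., satisfies x+1 = x+x' for all x. Moreover, an i-monoid satisfying left-distributivity x*(y+z) = x*y + x*z is locally-complemented if and only if it is left-divisible. -/
/-- De Morgan dual addition in an i-monoid: `x + y := (x' * y')'. -/
def dadd {M : Type*} [Mul M] (n : M → M) (x y : M) : M := n (n x * n y)

/-- Every i-monoid satisfying left-divisibility `x*y = x*(x'+y)` is locally-complemented,
i.e., satisfies `x+1 = x+x'`. Moreover, an i-monoid satisfying left-distributivity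
`x*(y+z) = x*y + x*z` is locally-complemented iff it is left-divisible. -/
theorem stmt_2 {M : Type*} [Monoid M] (n : M → M)
    (idem : ∀ x : M, x * x = x)
    (invol : ∀ x : M, n (n x) = x) :
    ((∀ x y : M, x * y = x * dadd n (n x) y) →
      (∀ x : M, dadd n x 1 = dadd n x (n x))) ∧
    ((∀ x y z : M, x * dadd n y z = dadd n (x * y) (x * z)) →
      ((∀ x : M, dadd n x 1 = dadd n x (n x)) ↔
        (∀ x y : M, x * y = x * dadd n (n x) y))) := by
  have div_imp_lc : (∀ x y : M, x * y = x * dadd n (n x) y) →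
      (∀ x : M, dadd n x 1 = dadd n x (n x)) := by
    intro H x
    unfold dadd
    have h := H (n x) (n 1)
    unfold dadd at h
    rw [invol, invol, mul_one, invol] at h
    rw [invol, h]
  refine ⟨div_imp_lc, ?_⟩
  intro D
  refine ⟨?_, div_imp_lc⟩
  intro LC x y
  -- from LC at n x : x * n 1 = x * n x
  have key : x * n 1 = x * n x := by
    have h := LC (n x)
    unfold dadd at h
    rw [invol] at h
    have := congrArg n h
    rwa [invol, invol] at this
  have e1 : x * dadd n (n 1) y = dadd n (x * n 1) (x * y) := D x (n 1) y
  have e2 : x * dadd n (n x) y = dadd n (x * n x) (x * y) := D x (n x) y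
  have e3 : dadd n (n 1) y = y := by
    unfold dadd; rw [invol, one_mul, invol]
  rw [e2, ← key, ← e1, e3]
end

section
/- An i-monoid satisfies both right-orthodistributivity (x+x')*y = x*y + x'*y and local complementation x+1 = x+x' if and only if it satisfies left-decomposition (x+1)*y = x*y + x'*y. -/
/-- An i-monoid satisfies both right-orthodistributivity `(x+x')*y = x*y + x'*y` and
local complementation `x+1 = x+x'` iff it satisfies left-decomposition
`(x+1)*y = x*y + x'*y`. -/
theorem stmt_3 {M : Type*} [Monoid M] (n : M → M)
    (idem : ∀ x : M, x * x = x)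
    (invol : ∀ x : M, n (n x) = x) :
    ((∀ x y : M, dadd n x (n x) * y = dadd n (x * y) (n x * y)) ∧
      (∀ x : M, dadd n x 1 = dadd n x (n x))) ↔
    (∀ x y : M, dadd n x 1 * y = dadd n (x * y) (n x * y)) := by
  constructor
  · rintro ⟨hd, hc⟩ x y
    rw [hc, hd]
  · intro h
    have hc : ∀ x : M, dadd n x 1 = dadd n x (n x) := by
      intro x
      have := h x 1
      simpa [mul_one] using this
    refine ⟨?_, hc⟩
    intro x y
    rw [← hc, h]
end

section
/- Every i-monoid satisfying local commutativity (y+1)*(x*y) = (x+1)*(y*x) is left-regular (x*y*x = x*y for all x, y) and satisfies local-unit commutativity (x+1)*(y+1) = (y+1)*(x+1) for all x, y. -/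
/-- Every i-monoid satisfying local commutativity `(y+1)*(x*y) = (x+1)*(y*x)` is
left-regular (`x*y*x = x*y`) and satisfies local-unit commutativity
`(x+1)*(y+1) = (y+1)*(x+1)`. -/
theorem stmt_5 {M : Type*} [Monoid M] (n : M → M)
    (idem : ∀ x : M, x * x = x)
    (invol : ∀ x : M, n (n x) = x)
    (lcomm : ∀ x y : M, dadd n y 1 * (x * y) = dadd n x 1 * (y * x)) :
    (∀ x y : M, x * y * x = x * y) ∧
    (∀ x y : M, dadd n x 1 * dadd n y 1 = dadd n y 1 * dadd n x 1) := by
  have hone : dadd n 1 1 = 1 := by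
    simp only [dadd, idem (n 1), invol]
  -- (x+1) * x = x
  have hA : ∀ x : M, dadd n x 1 * x = x := by
    intro x
    have := lcomm x 1
    simpa [hone] using this.symm
  -- left regularity
  have hreg : ∀ x y : M, x * y * x = x * y := by
    intro x y
    have h := lcomm x (x * y)
    have hL : dadd n (x * y) 1 * (x * (x * y)) = x * y := by
      rw [← mul_assoc x x y, idem, hA]
    have hR : dadd n x 1 * (x * y * x) = x * y * x := by
      rw [mul_assoc x y x, ← mul_assoc, hA, ← mul_assoc]
    rw [hL, hR] at h
    exact h.symm
  refine ⟨hreg, ?_⟩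
  -- (x+1)+1 = x+1
  have hstab : ∀ x : M, dadd n (dadd n x 1) 1 = dadd n x 1 := by
    intro x
    simp only [dadd, invol, mul_assoc, idem (n 1)]
  intro x y
  have h := lcomm (dadd n x 1) (dadd n y 1)
  rw [hstab, hstab] at h
  -- h : Y * (X * Y) = X * (Y * X)
  calc dadd n x 1 * dadd n y 1
      = dadd n x 1 * dadd n y 1 * dadd n x 1 := (hreg _ _).symm
    _ = dadd n x 1 * (dadd n y 1 * dadd n x 1) := by rw [mul_assoc]
    _ = dadd n y 1 * (dadd n x 1 * dadd n y 1) := h.symm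
    _ = dadd n y 1 * dadd n x 1 * dadd n y 1 := by rw [mul_assoc]
    _ = dadd n y 1 * dadd n x 1 := hreg _ _
end

section
/- Let M be an i-monoid satisfying left-distributivity x*(y+z) = x*y + x*z, left-decomposition (x+1)*y = x*y + x'*y, and local-unit commutativity (x+1)*(y+1) = (y+1)*(x+1). Then M satisfies unit-coherence x+1 = x'+1 (equivalently x*0 = x'*0 = (x+1)'), dramatic conjugation x*y*x' = (x*y)*0, and left-coherence x*0 + y = (x+1)*y, for all x, y. -/
/-- Let `M` be an i-monoid satisfying left-distributivity, left-decomposition, and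
local-unit commutativity. Then `M` satisfies unit-coherence `x+1 = x'+1`
(equivalently `x*0 = x'*0 = (x+1)'`), dramatic conjugation `x*y*x' = (x*y)*0`,
and left-coherence `x*0 + y = (x+1)*y`. -/
theorem stmt_7 {M : Type*} [Monoid M] (n : M → M)
    (idem : ∀ x : M, x * x = x)
    (invol : ∀ x : M, n (n x) = x)
    (ldist : ∀ x y z : M, x * dadd n y z = dadd n (x * y) (x * z))
    (ldecomp : ∀ x y : M, dadd n x 1 * y = dadd n (x * y) (n x * y))
    (lucomm : ∀ x y : M, dadd n x 1 * dadd n y 1 = dadd n y 1 * dadd n x 1) :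
    (∀ x : M, dadd n x 1 = dadd n (n x) 1) ∧
    (∀ x : M, x * n 1 = n x * n 1) ∧
    (∀ x : M, x * n 1 = n (dadd n x 1)) ∧
    (∀ x y : M, x * y * n x = x * y * n 1) ∧
    (∀ x y : M, dadd n (x * n 1) y = dadd n x 1 * y) := by
  have inj : ∀ a b : M, n a = n b → a = b := by
    intro a b h
    rw [← invol a, h, invol]
  have nd : ∀ a b : M, n (dadd n a b) = n a * n b := by
    intro a b; rw [dadd, invol]
  have addself : ∀ a : M, dadd n a a = a := by
    intro a; rw [dadd, idem, invol]
  have d1 : dadd n (n 1) 1 = 1 := by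
    rw [dadd, invol, one_mul, invol]
  have d2 : dadd n 1 (n 1) = 1 := by
    rw [dadd, invol, mul_one, invol]
  have L9 : ∀ a : M, dadd n (a * n 1) a = a := by
    intro a
    have h := ldist a (n 1) 1
    rw [d1, mul_one] at h; exact h.symm
  have L22 : ∀ a : M, dadd n a (a * n 1) = a := by
    intro a
    have h := ldist a 1 (n 1)
    rw [d2, mul_one] at h; exact h.symm
  have L7 : ∀ a : M, dadd n a 1 = dadd n a (n a) := by
    intro a
    have h := ldecomp a 1
    rwa [mul_one, mul_one, mul_one] at h
  have L10a : ∀ a : M, n a * a = n a * n 1 := by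
    intro a
    have h := L7 a
    rw [dadd, dadd, invol] at h
    exact (inj _ _ h).symm
  have L10b : ∀ a : M, a * n a = a * n 1 := by
    intro a
    have h := L10a (n a)
    rwa [invol] at h
  -- h2 : a * (a*b)' = a * b'
  have h2L : ∀ a b : M, a * n (a * b) = a * n b := by
    intro a b
    have e1 : dadd n (n a) (n b) = n (a * b) := by rw [dadd, invol, invol]
    have e2 : dadd n (n 1) (n b) = n b := by rw [dadd, invol, invol, one_mul]
    calc a * n (a * b) = a * dadd n (n a) (n b) := by rw [e1]
      _ = dadd n (a * n a) (a * n b) := ldist a (n a) (n b)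
      _ = dadd n (a * n 1) (a * n b) := by rw [L10b]
      _ = a * dadd n (n 1) (n b) := (ldist a (n 1) (n b)).symm
      _ = a * n b := by rw [e2]
  -- unit coherence
  have eA : ∀ a : M, dadd n a 1 = dadd n (n a) 1 := by
    intro a
    have p1 : a * dadd n (n a) 1 = a := by
      rw [ldist, mul_one, L10b, L9]
    have p2 : n a * dadd n (n a) 1 = n a := by
      rw [ldist, mul_one, idem, addself]
    have q1 : n a * dadd n a 1 = n a := by
      rw [ldist, mul_one, L10a, L9]
    have q2 : a * dadd n a 1 = a := by
      rw [ldist, mul_one, idem, addself]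
    have h1 : dadd n a 1 * dadd n (n a) 1 = dadd n a (n a) := by
      rw [ldecomp, p1, p2]
    have h1' : dadd n (n a) 1 * dadd n a 1 = dadd n (n a) a := by
      rw [ldecomp, invol, q1, q2]
    have h := lucomm a (n a)
    rw [h1, h1'] at h
    calc dadd n a 1 = dadd n a (n a) := L7 a
      _ = dadd n (n a) a := h
      _ = dadd n (n a) (n (n a)) := by rw [invol]
      _ = dadd n (n a) 1 := (L7 (n a)).symm
  have B : ∀ a : M, a * n 1 = n a * n 1 := by
    intro a
    have h := eA a
    rw [dadd, dadd, invol] at h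
    exact (inj _ _ h).symm
  have C : ∀ a : M, a * n 1 = n (dadd n a 1) := by
    intro a
    rw [dadd, invol]
    exact B a
  have Cn : ∀ a : M, n (a * n 1) = dadd n a 1 := by
    intro a
    rw [C, invol]
  -- K : (e(a)*b)' = e(a)*b'
  have Kl : ∀ a b : M, n (dadd n a 1 * b) = dadd n a 1 * n b := by
    intro a b
    have s1 : n (dadd n a 1 * b) = n (a * b) * n (n a * b) := by
      rw [ldecomp, nd]
    have key : n (a * n a) * n (a * b) = n (a * b) := by
      have r1 : dadd n (n a) b = n (a * n b) := by rw [dadd, invol]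
      calc n (a * n a) * n (a * b) = n (dadd n (a * n a) (a * b)) := (nd _ _).symm
        _ = n (a * dadd n (n a) b) := by rw [← ldist]
        _ = n (a * n (a * n b)) := by rw [r1]
        _ = n (a * n (n b)) := by rw [h2L]
        _ = n (a * b) := by rw [invol]
    have eform : dadd n a 1 = n (a * n a) := by rw [L10b, Cn]
    have L34 : dadd n a 1 * n (dadd n a 1 * b) = n (dadd n a 1 * b) := by
      rw [s1, ← mul_assoc, eform, key]
    calc n (dadd n a 1 * b) = dadd n a 1 * n (dadd n a 1 * b) := L34.symm
      _ = dadd n a 1 * n b := h2L (dadd n a 1) b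
  -- left coherence
  have E5 : ∀ a b : M, dadd n (a * n 1) b = dadd n a 1 * b := by
    intro a b
    rw [dadd, Cn, Kl, invol]
  -- e(a)*a = a
  have eu : ∀ a : M, dadd n a 1 * a = a := by
    intro a
    rw [ldecomp, idem, L10a, ← B]
    exact L22 a
  -- e(u) = e(u*a) when u*v=v, v*u=u for v = u*a ... specialized: e(a*b) = e(a*b*a)
  have EQ1 : ∀ a b : M, dadd n (a * b * a) 1 = dadd n (a * b) 1 := by
    intro a b
    have uv : (a * b) * (a * b * a) = a * b * a := by
      rw [← mul_assoc, idem]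
    have vu : (a * b * a) * (a * b) = a * b := by
      calc (a * b * a) * (a * b) = (a * b) * (a * (a * b)) := by
            simp only [mul_assoc]
        _ = (a * b) * ((a * a) * b) := by rw [← mul_assoc a a b]
        _ = a * b := by rw [idem, idem]
    have euv : dadd n (a * b) 1 * (a * b * a) = a * b * a := by
      calc dadd n (a * b) 1 * (a * b * a) = dadd n (a * b) 1 * ((a * b) * (a * b * a)) := by
            rw [uv]
        _ = (dadd n (a * b) 1 * (a * b)) * (a * b * a) := by rw [← mul_assoc]
        _ = (a * b) * (a * b * a) := by rw [eu]
        _ = a * b * a := uv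
    have evu : dadd n (a * b * a) 1 * (a * b) = a * b := by
      calc dadd n (a * b * a) 1 * (a * b)
          = dadd n (a * b * a) 1 * ((a * b * a) * (a * b)) := by rw [vu]
        _ = (dadd n (a * b * a) 1 * (a * b * a)) * (a * b) := by rw [← mul_assoc]
        _ = (a * b * a) * (a * b) := by rw [eu]
        _ = a * b := vu
    have h1 : dadd n (a * b) 1 * dadd n (a * b * a) 1 = dadd n (a * b * a) 1 := by
      calc dadd n (a * b) 1 * dadd n (a * b * a) 1
          = dadd n (a * b) 1 * dadd n (a * b * a) (n (a * b * a)) := by rw [← L7]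
        _ = dadd n (dadd n (a * b) 1 * (a * b * a)) (dadd n (a * b) 1 * n (a * b * a)) :=
            ldist _ _ _
        _ = dadd n (a * b * a) (n (a * b * a)) := by rw [← Kl, euv]
        _ = dadd n (a * b * a) 1 := (L7 _).symm
    have h2' : dadd n (a * b * a) 1 * dadd n (a * b) 1 = dadd n (a * b) 1 := by
      calc dadd n (a * b * a) 1 * dadd n (a * b) 1
          = dadd n (a * b * a) 1 * dadd n (a * b) (n (a * b)) := by rw [← L7]
        _ = dadd n (dadd n (a * b * a) 1 * (a * b)) (dadd n (a * b * a) 1 * n (a * b)) :=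
            ldist _ _ _
        _ = dadd n (a * b) (n (a * b)) := by rw [← Kl, evu]
        _ = dadd n (a * b) 1 := (L7 _).symm
    have h := lucomm (a * b) (a * b * a)
    rw [h1, h2'] at h
    exact h
  have c2 : ∀ a b : M, a * b * n 1 = a * b * a * n 1 := by
    intro a b
    rw [C (a * b), C (a * b * a), EQ1]
  -- r78 : a*b*a*(a*b)' = a*b*0
  have r78 : ∀ a b : M, a * b * a * n (a * b) = a * b * n 1 := by
    intro a b
    have ut : (a * b) * ((a * b) * n a) = (a * b) * n a := by
      rw [← mul_assoc, idem]
    have unt : (a * b) * n ((a * b) * n a) = a * b * a := by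
      rw [h2L, invol, mul_assoc]
    have s75 : dadd n ((a * b) * n a) (a * b) = dadd n ((a * b) * n a) (a * b * a) := by
      calc dadd n ((a * b) * n a) (a * b)
          = dadd n ((a * b) * ((a * b) * n a)) ((a * b) * 1) := by rw [ut, mul_one]
        _ = (a * b) * dadd n ((a * b) * n a) 1 := (ldist _ _ _).symm
        _ = (a * b) * dadd n ((a * b) * n a) (n ((a * b) * n a)) := by rw [← L7]
        _ = dadd n ((a * b) * ((a * b) * n a)) ((a * b) * n ((a * b) * n a)) := ldist _ _ _
        _ = dadd n ((a * b) * n a) (a * b * a) := by rw [ut, unt]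
    have s76 : n ((a * b) * n a) * n (a * b) = n ((a * b) * n a) * n (a * b * a) := by
      rw [← nd, ← nd, s75]
    have s77 : (a * b) * (n ((a * b) * n a) * n (a * b))
        = (a * b) * (n ((a * b) * n a) * n (a * b * a)) := by rw [s76]
    rw [← mul_assoc, ← mul_assoc, unt] at s77
    rw [L10b (a * b * a)] at s77
    calc a * b * a * n (a * b) = a * b * a * n 1 := s77
      _ = a * b * n 1 := (c2 a b).symm
  -- dramatic conjugation
  have D4 : ∀ a b : M, a * b * n a = a * b * n 1 := by
    intro a b
    calc a * b * n a = a * (b * n a) := mul_assoc _ _ _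
      _ = a * (b * n (b * a)) := by rw [h2L]
      _ = (a * b) * n (b * a) := (mul_assoc _ _ _).symm
      _ = ((a * b) * (a * b)) * n (b * a) := by rw [idem]
      _ = a * ((b * a * b) * n (b * a)) := by simp only [mul_assoc]
      _ = a * ((b * a) * n 1) := by rw [r78]
      _ = (a * b) * a * n 1 := by simp only [mul_assoc]
      _ = a * b * n 1 := (c2 a b).symm
  exact ⟨eA, B, C, D4, E5⟩
end

section
/- Let M be an i-monoid satisfying left-distributivity x*(y+z) = x*y + x*z, left-boundedness 0*x = 0, left-decomposition (x+1)*y = x*y + x'*y, and local-unit commutativity (x+1)*(y+1) = (y+1)*(x+1). Then M satisfies right-paradistributivity (x+y)*z = x*z + x'*y*z, left-paracommutativity x*y = (x'+y)*x, left-orthocoherence x*y + x'*z = (x'+y)*(x+z), and left-orthocommutativity x*y + x'*z = x'*z + x*y, for all x, y, z. -/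
set_option maxHeartbeats 2000000

/-- Let `M` be an i-monoid satisfying left-distributivity, left-boundedness,
left-decomposition, and local-unit commutativity. Then `M` satisfies
right-paradistributivity `(x+y)*z = x*z + x'*y*z`, left-paracommutativity
`x*y = (x'+y)*x`, left-orthocoherence `x*y + x'*z = (x'+y)*(x+z)`, and
left-orthocommutativity `x*y + x'*z = x'*z + x*y`. -/
theorem stmt_9 {M : Type*} [Monoid M] (n : M → M)
    (idem : ∀ x : M, x * x = x)
    (invol : ∀ x : M, n (n x) = x)
    (ldist : ∀ x y z : M, x * dadd n y z = dadd n (x * y) (x * z))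
    (lbdd : ∀ x : M, n 1 * x = n 1)
    (ldecomp : ∀ x y : M, dadd n x 1 * y = dadd n (x * y) (n x * y))
    (lucomm : ∀ x y : M, dadd n x 1 * dadd n y 1 = dadd n y 1 * dadd n x 1) :
    (∀ x y z : M, dadd n x y * z = dadd n (x * z) (n x * y * z)) ∧
    (∀ x y : M, x * y = dadd n (n x) y * x) ∧
    (∀ x y z : M, dadd n (x * y) (n x * z) = dadd n (n x) y * dadd n x z) ∧
    (∀ x y z : M, dadd n (x * y) (n x * z) = dadd n (n x * z) (x * y)) := by
  have ldist' : ∀ x y z : M, (x * (n ((n y) * (n z)))) = (n ((n (x * y)) * (n (x * z)))) := ldist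
  have lbdd' : ∀ x : M, ((n 1) * x) = (n 1) := lbdd
  have ldecomp' : ∀ x y : M, ((n ((n x) * (n 1))) * y) = (n ((n (x * y)) * (n ((n x) * y)))) := ldecomp
  have lucomm' : ∀ x y : M, ((n ((n x) * (n 1))) * (n ((n y) * (n 1)))) = ((n ((n y) * (n 1))) * (n ((n x) * (n 1)))) := lucomm
  have dadd_zero_p : ∀ x : M, (n ((n x) * (n (n 1)))) = x :=
    fun x => (Eq.trans (congrArg (fun _t : M => (n ((n x) * _t))) (invol 1) : (n ((n x) * (n (n 1)))) = (n ((n x) * 1))) (Eq.trans (congrArg (fun _t : M => (n _t)) (mul_one (n x)) : (n ((n x) * 1)) = (n (n x))) ((invol x) : (n (n x)) = x)))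
  have zero_dadd_p : ∀ x : M, (n ((n (n 1)) * (n x))) = x :=
    fun x => (Eq.trans (congrArg (fun _t : M => (n (_t * (n x)))) (invol 1) : (n ((n (n 1)) * (n x))) = (n (1 * (n x)))) (Eq.trans (congrArg (fun _t : M => (n _t)) (one_mul (n x)) : (n (1 * (n x))) = (n (n x))) ((invol x) : (n (n x)) = x)))
  have one_dadd_p : ∀ x : M, (n ((n 1) * (n x))) = 1 :=
    fun x => (Eq.trans (congrArg (fun _t : M => (n _t)) (lbdd' (n x)) : (n ((n 1) * (n x))) = (n (n 1))) ((invol 1) : (n (n 1)) = 1))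
  have dadd_self_p : ∀ x : M, (n ((n x) * (n x))) = x :=
    fun x => (Eq.trans (congrArg (fun _t : M => (n _t)) (idem (n x)) : (n ((n x) * (n x))) = (n (n x))) ((invol x) : (n (n x)) = x))
  have absorb1_p : ∀ x y : M, (n ((n x) * (n (x * y)))) = x :=
    fun x y => (Eq.trans (congrArg (fun _t : M => (n ((n _t) * (n (x * y))))) ((mul_one x)).symm : (n ((n x) * (n (x * y)))) = (n ((n (x * 1)) * (n (x * y))))) (Eq.trans (((ldist' x 1 y)).symm : (n ((n (x * 1)) * (n (x * y)))) = (x * (n ((n 1) * (n y))))) (Eq.trans (congrArg (fun _t : M => (x * _t)) (one_dadd_p y) : (x * (n ((n 1) * (n y)))) = (x * 1)) ((mul_one x) : (x * 1) = x))))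
  have absorb2_p : ∀ x y : M, (x * (n ((n x) * (n y)))) = x :=
    fun x y => (Eq.trans (((invol (x * (n ((n x) * (n y)))))).symm : (x * (n ((n x) * (n y)))) = (n (n (x * (n ((n x) * (n y))))))) (Eq.trans (congrArg (fun _t : M => (n (n (_t * (n ((n x) * (n y))))))) ((invol x)).symm : (n (n (x * (n ((n x) * (n y)))))) = (n (n ((n (n x)) * (n ((n x) * (n y))))))) (Eq.trans (congrArg (fun _t : M => (n _t)) (absorb1_p (n x) (n y)) : (n (n ((n (n x)) * (n ((n x) * (n y)))))) = (n (n x))) ((invol x) : (n (n x)) = x))))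
  have P15_p : ∀ x : M, (n ((n x) * (n 1))) = (n ((n x) * (n (n x)))) :=
    fun x => (Eq.trans (((mul_one (n ((n x) * (n 1))))).symm : (n ((n x) * (n 1))) = ((n ((n x) * (n 1))) * 1)) (Eq.trans ((ldecomp' x 1) : ((n ((n x) * (n 1))) * 1) = (n ((n (x * 1)) * (n ((n x) * 1))))) (Eq.trans (congrArg (fun _t : M => (n ((n (x * 1)) * (n _t)))) (mul_one (n x)) : (n ((n (x * 1)) * (n ((n x) * 1)))) = (n ((n (x * 1)) * (n (n x))))) (congrArg (fun _t : M => (n ((n _t) * (n (n x))))) (mul_one x) : (n ((n (x * 1)) * (n (n x)))) = (n ((n x) * (n (n x))))))))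
  have P16_p : ∀ x : M, (x * (n x)) = (x * (n 1)) :=
    fun x => (Eq.trans (((invol (x * (n x)))).symm : (x * (n x)) = (n (n (x * (n x))))) (Eq.trans (congrArg (fun _t : M => (n (n (_t * (n x))))) ((invol x)).symm : (n (n (x * (n x)))) = (n (n ((n (n x)) * (n x))))) (Eq.trans (congrArg (fun _t : M => (n (n ((n (n x)) * _t)))) ((invol (n x))).symm : (n (n ((n (n x)) * (n x)))) = (n (n ((n (n x)) * (n (n (n x))))))) (Eq.trans (congrArg (fun _t : M => (n _t)) ((P15_p (n x))).symm : (n (n ((n (n x)) * (n (n (n x)))))) = (n (n ((n (n x)) * (n 1))))) (Eq.trans (congrArg (fun _t : M => (n (n (_t * (n 1))))) (invol x) : (n (n ((n (n x)) * (n 1)))) = (n (n (x * (n 1))))) ((invol (x * (n 1))) : (n (n (x * (n 1)))) = (x * (n 1))))))))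
  have P9_p : ∀ x y z : M, (n ((n x) * (n (y * z)))) = ((n ((n x) * (n y))) * (n ((n x) * (n z)))) :=
    fun x y z => (Eq.trans (congrArg (fun _t : M => (n ((n x) * (n (_t * z))))) ((invol y)).symm : (n ((n x) * (n (y * z)))) = (n ((n x) * (n ((n (n y)) * z))))) (Eq.trans (congrArg (fun _t : M => (n ((n x) * (n ((n (n y)) * _t))))) ((invol z)).symm : (n ((n x) * (n ((n (n y)) * z)))) = (n ((n x) * (n ((n (n y)) * (n (n z))))))) (Eq.trans (congrArg (fun _t : M => (n _t)) (ldist' (n x) (n y) (n z)) : (n ((n x) * (n ((n (n y)) * (n (n z)))))) = (n (n ((n ((n x) * (n y))) * (n ((n x) * (n z))))))) ((invol ((n ((n x) * (n y))) * (n ((n x) * (n z))))) : (n (n ((n ((n x) * (n y))) * (n ((n x) * (n z)))))) = ((n ((n x) * (n y))) * (n ((n x) * (n z))))))))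
  have P16b_p : ∀ x : M, ((n x) * x) = ((n x) * (n 1)) :=
    fun x => (Eq.trans (congrArg (fun _t : M => ((n x) * _t)) ((invol x)).symm : ((n x) * x) = ((n x) * (n (n x)))) ((P16_p (n x)) : ((n x) * (n (n x))) = ((n x) * (n 1))))
  have zero_absorb_p : ∀ x y : M, ((x * (n 1)) * y) = (x * (n 1)) :=
    fun x y => (Eq.trans ((mul_assoc x (n 1) y) : ((x * (n 1)) * y) = (x * ((n 1) * y))) (congrArg (fun _t : M => (x * _t)) (lbdd' y) : (x * ((n 1) * y)) = (x * (n 1))))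
  have R2_p : ∀ x y : M, (n ((n x) * (n y))) = ((n ((n x) * (n 1))) * (n ((n x) * (n y)))) :=
    fun x y => (Eq.trans (congrArg (fun _t : M => (n ((n x) * (n _t)))) ((one_mul y)).symm : (n ((n x) * (n y))) = (n ((n x) * (n (1 * y))))) ((P9_p x 1 y) : (n ((n x) * (n (1 * y)))) = ((n ((n x) * (n 1))) * (n ((n x) * (n y))))))
  have L3_p : ∀ x : M, ((n ((n x) * (n 1))) * x) = x :=
    fun x => (Eq.trans (congrArg (fun _t : M => ((n ((n x) * (n 1))) * _t)) ((dadd_zero_p x)).symm : ((n ((n x) * (n 1))) * x) = ((n ((n x) * (n 1))) * (n ((n x) * (n (n 1)))))) (Eq.trans (((R2_p x (n 1))).symm : ((n ((n x) * (n 1))) * (n ((n x) * (n (n 1))))) = (n ((n x) * (n (n 1))))) ((dadd_zero_p x) : (n ((n x) * (n (n 1)))) = x)))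
  have L2b_p : ∀ x y : M, (n ((n x) * (n ((n x) * y)))) = (n ((n x) * (n y))) :=
    fun x y => (Eq.trans ((P9_p x (n x) y) : (n ((n x) * (n ((n x) * y)))) = ((n ((n x) * (n (n x)))) * (n ((n x) * (n y))))) (Eq.trans (congrArg (fun _t : M => (_t * (n ((n x) * (n y))))) ((P15_p x)).symm : ((n ((n x) * (n (n x)))) * (n ((n x) * (n y)))) = ((n ((n x) * (n 1))) * (n ((n x) * (n y))))) (((R2_p x y)).symm : ((n ((n x) * (n 1))) * (n ((n x) * (n y)))) = (n ((n x) * (n y))))))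
  have R3_p : ∀ x y : M, (x * (n ((n (n x)) * (n y)))) = (x * y) :=
    fun x y => (Eq.trans ((ldist' x (n x) y) : (x * (n ((n (n x)) * (n y)))) = (n ((n (x * (n x))) * (n (x * y))))) (Eq.trans (congrArg (fun _t : M => (n ((n _t) * (n (x * y))))) (P16_p x) : (n ((n (x * (n x))) * (n (x * y)))) = (n ((n (x * (n 1))) * (n (x * y))))) (Eq.trans (((ldist' x (n 1) y)).symm : (n ((n (x * (n 1))) * (n (x * y)))) = (x * (n ((n (n 1)) * (n y))))) (congrArg (fun _t : M => (x * _t)) (zero_dadd_p y) : (x * (n ((n (n 1)) * (n y)))) = (x * y)))))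
  have S2_p : ∀ x y : M, (n ((n (x * (n 1))) * (n (x * y)))) = (x * y) :=
    fun x y => (Eq.trans (((ldist' x (n 1) y)).symm : (n ((n (x * (n 1))) * (n (x * y)))) = (x * (n ((n (n 1)) * (n y))))) (congrArg (fun _t : M => (x * _t)) (zero_dadd_p y) : (x * (n ((n (n 1)) * (n y)))) = (x * y)))
  have H2_p : ∀ x y : M, ((n x) * (n ((n x) * (n y)))) = ((n x) * y) :=
    fun x y => (Eq.trans (congrArg (fun _t : M => ((n x) * (n (_t * (n y))))) ((invol (n x))).symm : ((n x) * (n ((n x) * (n y)))) = ((n x) * (n ((n (n (n x))) * (n y))))) ((R3_p (n x) y) : ((n x) * (n ((n (n (n x))) * (n y)))) = ((n x) * y)))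
  have G1pre_p : ∀ x y z : M, ((n ((n x) * (n 1))) * ((n ((n x) * (n y))) * z)) = (n ((n (x * z)) * (n (((n x) * y) * z)))) :=
    fun x y z => (Eq.trans ((ldecomp' x ((n ((n x) * (n y))) * z)) : ((n ((n x) * (n 1))) * ((n ((n x) * (n y))) * z)) = (n ((n (x * ((n ((n x) * (n y))) * z))) * (n ((n x) * ((n ((n x) * (n y))) * z)))))) (Eq.trans (congrArg (fun _t : M => (n ((n _t) * (n ((n x) * ((n ((n x) * (n y))) * z)))))) ((mul_assoc x (n ((n x) * (n y))) z)).symm : (n ((n (x * ((n ((n x) * (n y))) * z))) * (n ((n x) * ((n ((n x) * (n y))) * z))))) = (n ((n ((x * (n ((n x) * (n y)))) * z)) * (n ((n x) * ((n ((n x) * (n y))) * z)))))) (Eq.trans (congrArg (fun _t : M => (n ((n (_t * z)) * (n ((n x) * ((n ((n x) * (n y))) * z)))))) (absorb2_p x y) : (n ((n ((x * (n ((n x) * (n y)))) * z)) * (n ((n x) * ((n ((n x) * (n y))) * z))))) = (n ((n (x * z)) * (n ((n x) * ((n ((n x) * (n y))) * z)))))) (Eq.trans (congrArg (fun _t : M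 => (n ((n (x * z)) * (n _t)))) ((mul_assoc (n x) (n ((n x) * (n y))) z)).symm : (n ((n (x * z)) * (n ((n x) * ((n ((n x) * (n y))) * z))))) = (n ((n (x * z)) * (n (((n x) * (n ((n x) * (n y)))) * z))))) (congrArg (fun _t : M => (n ((n (x * z)) * (n (_t * z))))) (H2_p x y) : (n ((n (x * z)) * (n (((n x) * (n ((n x) * (n y)))) * z)))) = (n ((n (x * z)) * (n (((n x) * y) * z)))))))))
  have G1_p : ∀ x y z : M, ((n ((n x) * (n y))) * z) = (n ((n (x * z)) * (n (((n x) * y) * z)))) :=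
    fun x y z => (Eq.trans (congrArg (fun _t : M => (_t * z)) (R2_p x y) : ((n ((n x) * (n y))) * z) = (((n ((n x) * (n 1))) * (n ((n x) * (n y)))) * z)) (Eq.trans ((mul_assoc (n ((n x) * (n 1))) (n ((n x) * (n y))) z) : (((n ((n x) * (n 1))) * (n ((n x) * (n y)))) * z) = ((n ((n x) * (n 1))) * ((n ((n x) * (n y))) * z))) ((G1pre_p x y z) : ((n ((n x) * (n 1))) * ((n ((n x) * (n y))) * z)) = (n ((n (x * z)) * (n (((n x) * y) * z)))))))
  have dadd_assoc_p : ∀ x y z : M, (n ((n (n ((n x) * (n y)))) * (n z))) = (n ((n x) * (n (n ((n y) * (n z)))))) :=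
    fun x y z => (Eq.trans (congrArg (fun _t : M => (n (_t * (n z)))) (invol ((n x) * (n y))) : (n ((n (n ((n x) * (n y)))) * (n z))) = (n (((n x) * (n y)) * (n z)))) (Eq.trans (congrArg (fun _t : M => (n _t)) (mul_assoc (n x) (n y) (n z)) : (n (((n x) * (n y)) * (n z))) = (n ((n x) * ((n y) * (n z))))) (congrArg (fun _t : M => (n ((n x) * _t))) ((invol ((n y) * (n z)))).symm : (n ((n x) * ((n y) * (n z)))) = (n ((n x) * (n (n ((n y) * (n z)))))))))
  have E11_p : ∀ x : M, (n ((n x) * (n (n ((n (x * (n 1))) * (n ((n x) * (n 1)))))))) = x :=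
    fun x => (Eq.trans (((dadd_assoc_p x (x * (n 1)) ((n x) * (n 1)))).symm : (n ((n x) * (n (n ((n (x * (n 1))) * (n ((n x) * (n 1)))))))) = (n ((n (n ((n x) * (n (x * (n 1)))))) * (n ((n x) * (n 1)))))) (Eq.trans (congrArg (fun _t : M => (n ((n _t) * (n ((n x) * (n 1)))))) (absorb1_p x (n 1)) : (n ((n (n ((n x) * (n (x * (n 1)))))) * (n ((n x) * (n 1))))) = (n ((n x) * (n ((n x) * (n 1)))))) (Eq.trans ((L2b_p x (n 1)) : (n ((n x) * (n ((n x) * (n 1))))) = (n ((n x) * (n (n 1))))) ((dadd_zero_p x) : (n ((n x) * (n (n 1)))) = x))))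
  have L3s_p : ∀ x : M, (n ((n x) * (n ((n x) * (n 1))))) = x :=
    fun x => (Eq.trans ((L2b_p x (n 1)) : (n ((n x) * (n ((n x) * (n 1))))) = (n ((n x) * (n (n 1))))) ((dadd_zero_p x) : (n ((n x) * (n (n 1)))) = x))
  have zerocomm_p : ∀ x y : M, (n ((n (x * (n 1))) * (n (y * (n 1))))) = (n ((n (y * (n 1))) * (n (x * (n 1))))) :=
    fun x y => (Eq.trans (congrArg (fun _t : M => (n ((n (_t * (n 1))) * (n (y * (n 1)))))) ((invol x)).symm : (n ((n (x * (n 1))) * (n (y * (n 1))))) = (n ((n ((n (n x)) * (n 1))) * (n (y * (n 1)))))) (Eq.trans (congrArg (fun _t : M => (n ((n ((n (n x)) * (n 1))) * (n (_t * (n 1)))))) ((invol y)).symm : (n ((n ((n (n x)) * (n 1))) * (n (y * (n 1))))) = (n ((n ((n (n x)) * (n 1))) * (n ((n (n y)) * (n 1)))))) (Eq.trans (congrArg (fun _t : M => (n _t)) (lucomm' (n x) (n y)) : (n ((n ((n (n x)) * (n 1))) * (n ((n (n y)) * (n 1))))) = (n ((n ((n (n y)) * (n 1))) * (n ((n (n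 x)) * (n 1)))))) (Eq.trans (congrArg (fun _t : M => (n ((n ((n (n y)) * (n 1))) * (n (_t * (n 1)))))) (invol x) : (n ((n ((n (n y)) * (n 1))) * (n ((n (n x)) * (n 1))))) = (n ((n ((n (n y)) * (n 1))) * (n (x * (n 1)))))) (congrArg (fun _t : M => (n ((n (_t * (n 1))) * (n (x * (n 1)))))) (invol y) : (n ((n ((n (n y)) * (n 1))) * (n (x * (n 1))))) = (n ((n (y * (n 1))) * (n (x * (n 1))))))))))
  have Y0_p : ∀ x : M, (n ((n (x * (n 1))) * (n x))) = x :=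
    fun x => (Eq.trans (congrArg (fun _t : M => (n ((n (x * (n 1))) * (n _t)))) ((mul_one x)).symm : (n ((n (x * (n 1))) * (n x))) = (n ((n (x * (n 1))) * (n (x * 1))))) (Eq.trans ((S2_p x 1) : (n ((n (x * (n 1))) * (n (x * 1)))) = (x * 1)) ((mul_one x) : (x * 1) = x)))
  have W1_p : ∀ x y : M, (n ((n (x * y)) * (n ((n x) * (n 1))))) = (x * y) :=
    fun x y => (Eq.trans (congrArg (fun _t : M => (n ((n (x * y)) * (n _t)))) ((zero_absorb_p (n x) y)).symm : (n ((n (x * y)) * (n ((n x) * (n 1))))) = (n ((n (x * y)) * (n (((n x) * (n 1)) * y))))) (Eq.trans (((G1_p x (n 1) y)).symm : (n ((n (x * y)) * (n (((n x) * (n 1)) * y)))) = ((n ((n x) * (n (n 1)))) * y)) (congrArg (fun _t : M => (_t * y)) (dadd_zero_p x) : ((n ((n x) * (n (n 1)))) * y) = (x * y))))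
  have F1_p : ∀ x y : M, ((n ((n x) * (n 1))) * ((n ((n y) * (n 1))) * x)) = ((n ((n y) * (n 1))) * x) :=
    fun x y => (Eq.trans (((mul_assoc (n ((n x) * (n 1))) (n ((n y) * (n 1))) x)).symm : ((n ((n x) * (n 1))) * ((n ((n y) * (n 1))) * x)) = (((n ((n x) * (n 1))) * (n ((n y) * (n 1)))) * x)) (Eq.trans (congrArg (fun _t : M => (_t * x)) (lucomm' x y) : (((n ((n x) * (n 1))) * (n ((n y) * (n 1)))) * x) = (((n ((n y) * (n 1))) * (n ((n x) * (n 1)))) * x)) (Eq.trans ((mul_assoc (n ((n y) * (n 1))) (n ((n x) * (n 1))) x) : (((n ((n y) * (n 1))) * (n ((n x) * (n 1)))) * x) = ((n ((n y) * (n 1))) * ((n ((n x) * (n 1))) * x))) (congrArg (fun _t : M => ((n ((n y) * (n 1))) * _t)) (L3_p x) : ((n ((n y) * (n 1))) * ((n ((n x) * (n 1))) * x)) = ((n ((n y) * (n 1))) * x)))))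
  have K_p : ∀ x : M, (n ((n (x * (n 1))) * (n 1))) = (n ((n ((n x) * (n 1))) * (n 1))) :=
    fun x => (Eq.trans (congrArg (fun _t : M => (n ((n _t) * (n 1)))) ((W1_p x (n 1))).symm : (n ((n (x * (n 1))) * (n 1))) = (n ((n (n ((n (x * (n 1))) * (n ((n x) * (n 1)))))) * (n 1)))) (Eq.trans (congrArg (fun _t : M => (n ((n (n ((n (_t * (n 1))) * (n ((n x) * (n 1)))))) * (n 1)))) ((invol x)).symm : (n ((n (n ((n (x * (n 1))) * (n ((n x) * (n 1)))))) * (n 1))) = (n ((n (n ((n ((n (n x)) * (n 1))) * (n ((n x) * (n 1)))))) * (n 1)))) (Eq.trans (congrArg (fun _t : M => (n ((n _t) * (n 1)))) ((zerocomm_p (n x) (n (n x)))).symm : (n ((n (n ((n ((n (n x)) * (n 1))) * (n ((n x) * (n 1)))))) * (n 1))) = (n ((n (n ((n ((n x) * (n 1))) * (n ((n (n x)) * (n 1)))))) * (n 1)))) (congrArg (fun _t : M => (n ((n _t) * (n 1)))) (W1_p (n x) (n 1)) : (n ((n (n ((n ((n x) * (n 1))) * (n ((n (n x)) * (n 1))))))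 * (n 1))) = (n ((n ((n x) * (n 1))) * (n 1)))))))
  have ZEQ_p : ∀ x : M, (x * (n 1)) = ((n x) * (n 1)) :=
    fun x => (Eq.trans (((W1_p x (n 1))).symm : (x * (n 1)) = (n ((n (x * (n 1))) * (n ((n x) * (n 1)))))) (Eq.trans (congrArg (fun _t : M => (n ((n (_t * (n 1))) * (n ((n x) * (n 1)))))) ((invol x)).symm : (n ((n (x * (n 1))) * (n ((n x) * (n 1))))) = (n ((n ((n (n x)) * (n 1))) * (n ((n x) * (n 1)))))) (Eq.trans (((zerocomm_p (n x) (n (n x)))).symm : (n ((n ((n (n x)) * (n 1))) * (n ((n x) * (n 1))))) = (n ((n ((n x) * (n 1))) * (n ((n (n x)) * (n 1)))))) ((W1_p (n x) (n 1)) : (n ((n ((n x) * (n 1))) * (n ((n (n x)) * (n 1))))) = ((n x) * (n 1))))))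
  have N2_p : ∀ x : M, (n ((n ((n x) * (n 1))) * (n x))) = x :=
    fun x => (Eq.trans (congrArg (fun _t : M => (n ((n _t) * (n x)))) ((ZEQ_p x)).symm : (n ((n ((n x) * (n 1))) * (n x))) = (n ((n (x * (n 1))) * (n x)))) ((Y0_p x) : (n ((n (x * (n 1))) * (n x))) = x))
  have N2g_p : ∀ x y : M, (n ((n ((n x) * (n 1))) * (n (x * y)))) = (x * y) :=
    fun x y => (Eq.trans (congrArg (fun _t : M => (n ((n _t) * (n (x * y))))) ((ZEQ_p x)).symm : (n ((n ((n x) * (n 1))) * (n (x * y)))) = (n ((n (x * (n 1))) * (n (x * y))))) ((S2_p x y) : (n ((n (x * (n 1))) * (n (x * y)))) = (x * y)))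
  have P11_p : ∀ x y : M, (n ((n (x * (n 1))) * (n y))) = ((n ((n x) * (n y))) * (n ((n (n x)) * (n y)))) :=
    fun x y => (Eq.trans (congrArg (fun _t : M => (n ((n (_t * (n 1))) * (n y)))) ((invol x)).symm : (n ((n (x * (n 1))) * (n y))) = (n ((n ((n (n x)) * (n 1))) * (n y)))) (Eq.trans (congrArg (fun _t : M => (n _t)) (ldecomp' (n x) (n y)) : (n ((n ((n (n x)) * (n 1))) * (n y))) = (n (n ((n ((n x) * (n y))) * (n ((n (n x)) * (n y))))))) ((invol ((n ((n x) * (n y))) * (n ((n (n x)) * (n y))))) : (n (n ((n ((n x) * (n y))) * (n ((n (n x)) * (n y)))))) = ((n ((n x) * (n y))) * (n ((n (n x)) * (n y)))))))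
  have G2a_p : ∀ x y : M, ((n ((n (n x)) * (n (x * y)))) * x) = (x * y) :=
    fun x y => (Eq.trans (congrArg (fun _t : M => ((n ((n (n x)) * (n (x * y)))) * _t)) ((absorb1_p x y)).symm : ((n ((n (n x)) * (n (x * y)))) * x) = ((n ((n (n x)) * (n (x * y)))) * (n ((n x) * (n (x * y)))))) (Eq.trans (congrArg (fun _t : M => ((n ((n (n x)) * (n (x * y)))) * (n (_t * (n (x * y)))))) ((invol (n x))).symm : ((n ((n (n x)) * (n (x * y)))) * (n ((n x) * (n (x * y))))) = ((n ((n (n x)) * (n (x * y)))) * (n ((n (n (n x))) * (n (x * y)))))) (Eq.trans (((P11_p (n x) (x * y))).symm : ((n ((n (n x)) * (n (x * y)))) * (n ((n (n (n x))) * (n (x * y))))) = (n ((n ((n x) * (n 1))) * (n (x * y))))) ((N2g_p x y) : (n ((n ((n x) * (n 1))) * (n (x * y)))) = (x * y)))))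
  have G2_p : ∀ x y : M, ((n ((n (n x)) * (n y))) * x) = (x * y) :=
    fun x y => (Eq.trans (congrArg (fun _t : M => (_t * x)) ((L2b_p (n x) y)).symm : ((n ((n (n x)) * (n y))) * x) = ((n ((n (n x)) * (n ((n (n x)) * y)))) * x)) (Eq.trans (congrArg (fun _t : M => ((n ((n (n x)) * (n (_t * y)))) * x)) (invol x) : ((n ((n (n x)) * (n ((n (n x)) * y)))) * x) = ((n ((n (n x)) * (n (x * y)))) * x)) ((G2a_p x y) : ((n ((n (n x)) * (n (x * y)))) * x) = (x * y))))
  have C1_p : ∀ x y : M, ((x * y) * x) = (x * y) :=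
    fun x y => (Eq.trans (congrArg (fun _t : M => (_t * x)) ((G2a_p x y)).symm : ((x * y) * x) = (((n ((n (n x)) * (n (x * y)))) * x) * x)) (Eq.trans ((mul_assoc (n ((n (n x)) * (n (x * y)))) x x) : (((n ((n (n x)) * (n (x * y)))) * x) * x) = ((n ((n (n x)) * (n (x * y)))) * (x * x))) (Eq.trans (congrArg (fun _t : M => ((n ((n (n x)) * (n (x * y)))) * _t)) (idem x) : ((n ((n (n x)) * (n (x * y)))) * (x * x)) = ((n ((n (n x)) * (n (x * y)))) * x)) ((G2a_p x y) : ((n ((n (n x)) * (n (x * y)))) * x) = (x * y)))))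
  have XW0_p : ∀ x y : M, (n ((n (x * y)) * (n (x * (n 1))))) = (x * y) :=
    fun x y => (Eq.trans (congrArg (fun _t : M => (n ((n (x * y)) * (n _t)))) (ZEQ_p x) : (n ((n (x * y)) * (n (x * (n 1))))) = (n ((n (x * y)) * (n ((n x) * (n 1)))))) ((W1_p x y) : (n ((n (x * y)) * (n ((n x) * (n 1))))) = (x * y)))
  have XW_p : ∀ x y z : M, (x * (n ((n (x * y)) * (n ((n x) * z))))) = (x * y) :=
    fun x y z => (Eq.trans ((ldist' x (x * y) ((n x) * z)) : (x * (n ((n (x * y)) * (n ((n x) * z))))) = (n ((n (x * (x * y))) * (n (x * ((n x) * z)))))) (Eq.trans (congrArg (fun _t : M => (n ((n _t) * (n (x * ((n x) * z)))))) ((mul_assoc x x y)).symm : (n ((n (x * (x * y))) * (n (x * ((n x) * z))))) = (n ((n ((x * x) * y)) * (n (x * ((n x) * z)))))) (Eq.trans (congrArg (fun _t : M => (n ((n (_t * y)) * (n (x * ((n x) * z)))))) (idem x) : (n ((n ((x * x) * y)) * (n (x * ((n x) * z))))) = (n ((n (x * y)) * (n (x * ((n x) * z)))))) (Eq.trans (congrArg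 (fun _t : M => (n ((n (x * y)) * (n _t)))) ((mul_assoc x (n x) z)).symm : (n ((n (x * y)) * (n (x * ((n x) * z))))) = (n ((n (x * y)) * (n ((x * (n x)) * z))))) (Eq.trans (congrArg (fun _t : M => (n ((n (x * y)) * (n (_t * z))))) (P16_p x) : (n ((n (x * y)) * (n ((x * (n x)) * z)))) = (n ((n (x * y)) * (n ((x * (n 1)) * z))))) (Eq.trans (congrArg (fun _t : M => (n ((n (x * y)) * (n _t)))) (zero_absorb_p x z) : (n ((n (x * y)) * (n ((x * (n 1)) * z)))) = (n ((n (x * y)) * (n (x * (n 1)))))) ((XW0_p x y) : (n ((n (x * y)) * (n (x * (n 1))))) = (x * y))))))))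
  have XWp_p : ∀ x y z : M, ((n x) * (n ((n (x * y)) * (n ((n x) * z))))) = ((n x) * z) :=
    fun x y z => (Eq.trans (((H2_p x (n ((n (x * y)) * (n ((n x) * z)))))).symm : ((n x) * (n ((n (x * y)) * (n ((n x) * z))))) = ((n x) * (n ((n x) * (n (n ((n (x * y)) * (n ((n x) * z))))))))) (Eq.trans (congrArg (fun _t : M => ((n x) * _t)) ((dadd_assoc_p x (x * y) ((n x) * z))).symm : ((n x) * (n ((n x) * (n (n ((n (x * y)) * (n ((n x) * z)))))))) = ((n x) * (n ((n (n ((n x) * (n (x * y))))) * (n ((n x) * z)))))) (Eq.trans (congrArg (fun _t : M => ((n x) * (n ((n _t) * (n ((n x) * z)))))) (absorb1_p x y) : ((n x) * (n ((n (n ((n x) * (n (x * y))))) * (n ((n x) * z))))) = ((n x) * (n ((n x) * (n ((n x) * z)))))) (Eq.trans (congrArg (fun _t : M => ((n x) * _t)) (L2b_p x z) : ((n x) * (n ((n x) * (n ((n x) * z))))) = ((n x) * (n ((n x) * (n z))))) ((H2_p x z) : ((n x) * (n ((n x) * (n z)))) = ((n x) * z))))))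
  have SW1a_p : ∀ x y : M, ((n ((n (x * (n 1))) * (n 1))) * y) = (n ((n (x * (n 1))) * (n ((n ((n (n x)) * (n 1))) * y)))) :=
    fun x y => (Eq.trans ((ldecomp' (x * (n 1)) y) : ((n ((n (x * (n 1))) * (n 1))) * y) = (n ((n ((x * (n 1)) * y)) * (n ((n (x * (n 1))) * y))))) (Eq.trans (congrArg (fun _t : M => (n ((n ((x * (n 1)) * y)) * (n ((n (_t * (n 1))) * y))))) ((invol x)).symm : (n ((n ((x * (n 1)) * y)) * (n ((n (x * (n 1))) * y)))) = (n ((n ((x * (n 1)) * y)) * (n ((n ((n (n x)) * (n 1))) * y))))) (congrArg (fun _t : M => (n ((n _t) * (n ((n ((n (n x)) * (n 1))) * y))))) (zero_absorb_p x y) : (n ((n ((x * (n 1)) * y)) * (n ((n ((n (n x)) * (n 1))) * y)))) = (n ((n (x * (n 1))) * (n ((n ((n (n x)) * (n 1))) * y)))))))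
  have SW1b_p : ∀ x y : M, (n ((n (x * (n 1))) * (n ((n ((n (n x)) * (n 1))) * y)))) = (n ((n ((n x) * y)) * (n (x * y)))) :=
    fun x y => (Eq.trans (congrArg (fun _t : M => (n ((n _t) * (n ((n ((n (n x)) * (n 1))) * y))))) (ZEQ_p x) : (n ((n (x * (n 1))) * (n ((n ((n (n x)) * (n 1))) * y)))) = (n ((n ((n x) * (n 1))) * (n ((n ((n (n x)) * (n 1))) * y))))) (Eq.trans (congrArg (fun _t : M => (n ((n ((n x) * (n 1))) * (n _t)))) (ldecomp' (n x) y) : (n ((n ((n x) * (n 1))) * (n ((n ((n (n x)) * (n 1))) * y)))) = (n ((n ((n x) * (n 1))) * (n (n ((n ((n x) * y)) * (n ((n (n x)) * y)))))))) (Eq.trans (((dadd_assoc_p ((n x) * (n 1)) ((n x) * y) ((n (n x)) * y))).symm : (n ((n ((n x) * (n 1))) * (n (n ((n ((n x) * y)) * (n ((n (n x)) * y))))))) = (n ((n (n ((n ((n x) * (n 1))) * (n ((n x) * y))))) * (n ((n (n x)) * y))))) (Eq.trans (congrArg (fun _t : M => (n ((n (n ((n ((n x) * (n 1))) * (n ((n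 x) * y))))) * (n (_t * y))))) (invol x) : (n ((n (n ((n ((n x) * (n 1))) * (n ((n x) * y))))) * (n ((n (n x)) * y)))) = (n ((n (n ((n ((n x) * (n 1))) * (n ((n x) * y))))) * (n (x * y))))) (congrArg (fun _t : M => (n ((n _t) * (n (x * y))))) (S2_p (n x) y) : (n ((n (n ((n ((n x) * (n 1))) * (n ((n x) * y))))) * (n (x * y)))) = (n ((n ((n x) * y)) * (n (x * y)))))))))
  have SW1_p : ∀ x y : M, ((n ((n (x * (n 1))) * (n 1))) * y) = (n ((n ((n x) * y)) * (n (x * y)))) :=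
    fun x y => (Eq.trans ((SW1a_p x y) : ((n ((n (x * (n 1))) * (n 1))) * y) = (n ((n (x * (n 1))) * (n ((n ((n (n x)) * (n 1))) * y))))) ((SW1b_p x y) : (n ((n (x * (n 1))) * (n ((n ((n (n x)) * (n 1))) * y)))) = (n ((n ((n x) * y)) * (n (x * y))))))
  have SW_p : ∀ x y : M, (n ((n ((n x) * y)) * (n (x * y)))) = (n ((n (x * y)) * (n ((n x) * y)))) :=
    fun x y => (Eq.trans (congrArg (fun _t : M => (n ((n ((n x) * y)) * (n (_t * y))))) ((invol x)).symm : (n ((n ((n x) * y)) * (n (x * y)))) = (n ((n ((n x) * y)) * (n ((n (n x)) * y))))) (Eq.trans (((ldecomp' (n x) y)).symm : (n ((n ((n x) * y)) * (n ((n (n x)) * y)))) = ((n ((n (n x)) * (n 1))) * y)) (Eq.trans (congrArg (fun _t : M => ((n _t) * y)) ((ZEQ_p (n x))).symm : ((n ((n (n x)) * (n 1))) * y) = ((n ((n x) * (n 1))) * y)) ((ldecomp' x y) : ((n ((n x) * (n 1))) * y) = (n ((n (x * y)) * (n ((n x) * y))))))))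
  have G4a_p : ∀ x y z : M, (n ((n (x * (n ((n (x * y)) * (n ((n x) * z)))))) * (n ((n x) * (n ((n (x * y)) * (n ((n x) * z)))))))) = (n ((n (x * y)) * (n ((n x) * z)))) :=
    fun x y z => (Eq.trans (congrArg (fun _t : M => (n ((n (x * (n ((n (x * y)) * (n ((n x) * z)))))) * (n _t)))) (XWp_p x y z) : (n ((n (x * (n ((n (x * y)) * (n ((n x) * z)))))) * (n ((n x) * (n ((n (x * y)) * (n ((n x) * z)))))))) = (n ((n (x * (n ((n (x * y)) * (n ((n x) * z)))))) * (n ((n x) * z))))) (congrArg (fun _t : M => (n ((n _t) * (n ((n x) * z))))) (XW_p x y z) : (n ((n (x * (n ((n (x * y)) * (n ((n x) * z)))))) * (n ((n x) * z)))) = (n ((n (x * y)) * (n ((n x) * z))))))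
  have G4_p : ∀ x y z : M, (n ((n (x * y)) * (n ((n x) * z)))) = (n ((n ((n x) * z)) * (n (x * y)))) :=
    fun x y z => (Eq.trans (((G4a_p x y z)).symm : (n ((n (x * y)) * (n ((n x) * z)))) = (n ((n (x * (n ((n (x * y)) * (n ((n x) * z)))))) * (n ((n x) * (n ((n (x * y)) * (n ((n x) * z))))))))) (Eq.trans (((SW_p x (n ((n (x * y)) * (n ((n x) * z)))))).symm : (n ((n (x * (n ((n (x * y)) * (n ((n x) * z)))))) * (n ((n x) * (n ((n (x * y)) * (n ((n x) * z)))))))) = (n ((n ((n x) * (n ((n (x * y)) * (n ((n x) * z)))))) * (n (x * (n ((n (x * y)) * (n ((n x) * z))))))))) (Eq.trans (congrArg (fun _t : M => (n ((n ((n x) * (n ((n (x * y)) * (n ((n x) * z)))))) * (n _t)))) (XW_p x y z) : (n ((n ((n x) * (n ((n (x * y)) * (n ((n x) * z)))))) * (n (x * (n ((n (x * y)) * (n ((n x) * z)))))))) = (n ((n ((n x) * (n ((n (x * y)) * (n ((n x) * z)))))) * (n (x * y))))) (congrArg (fun _t : M => (n ((n _t) * (n (x * y))))) (XWp_p x y z)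 : (n ((n ((n x) * (n ((n (x * y)) * (n ((n x) * z)))))) * (n (x * y)))) = (n ((n ((n x) * z)) * (n (x * y))))))))
  have G3b_p : ∀ x y z : M, ((x * y) * (n ((n x) * (n z)))) = (x * y) :=
    fun x y z => (Eq.trans ((ldist' (x * y) x z) : ((x * y) * (n ((n x) * (n z)))) = (n ((n ((x * y) * x)) * (n ((x * y) * z))))) (Eq.trans (congrArg (fun _t : M => (n ((n _t) * (n ((x * y) * z))))) (C1_p x y) : (n ((n ((x * y) * x)) * (n ((x * y) * z)))) = (n ((n (x * y)) * (n ((x * y) * z))))) ((absorb1_p (x * y) z) : (n ((n (x * y)) * (n ((x * y) * z)))) = (x * y))))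
  have G3a_p : ∀ x y z : M, ((n ((n (n x)) * (n y))) * (n ((n x) * (n z)))) = (n ((n ((n x) * z)) * (n (x * y)))) :=
    fun x y z => (Eq.trans ((G1_p (n x) y (n ((n x) * (n z)))) : ((n ((n (n x)) * (n y))) * (n ((n x) * (n z)))) = (n ((n ((n x) * (n ((n x) * (n z))))) * (n (((n (n x)) * y) * (n ((n x) * (n z)))))))) (Eq.trans (congrArg (fun _t : M => (n ((n _t) * (n (((n (n x)) * y) * (n ((n x) * (n z)))))))) (H2_p x z) : (n ((n ((n x) * (n ((n x) * (n z))))) * (n (((n (n x)) * y) * (n ((n x) * (n z))))))) = (n ((n ((n x) * z)) * (n (((n (n x)) * y) * (n ((n x) * (n z)))))))) (Eq.trans (congrArg (fun _t : M => (n ((n ((n x) * z)) * (n ((_t * y) * (n ((n x) * (n z)))))))) (invol x) : (n ((n ((n x) * z)) * (n (((n (n x)) * y) * (n ((n x) * (n z))))))) = (n ((n ((n x) * z)) * (n ((x * y) * (n ((n x) * (n z)))))))) (congrArg (fun _t : M => (n ((n ((n x) * z)) * (n _t)))) (G3b_p x y z) : (n ((n ((n x) * z)) * (n ((x * y) * (n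 ((n x) * (n z))))))) = (n ((n ((n x) * z)) * (n (x * y))))))))
  have G3_p : ∀ x y z : M, (n ((n (x * y)) * (n ((n x) * z)))) = ((n ((n (n x)) * (n y))) * (n ((n x) * (n z)))) :=
    fun x y z => (Eq.trans ((G4_p x y z) : (n ((n (x * y)) * (n ((n x) * z)))) = (n ((n ((n x) * z)) * (n (x * y))))) (((G3a_p x y z)).symm : (n ((n ((n x) * z)) * (n (x * y)))) = ((n ((n (n x)) * (n y))) * (n ((n x) * (n z))))))
  exact ⟨fun x y z => G1_p x y z, fun x y => (G2_p x y).symm, fun x y z => G3_p x y z, fun x y z => G4_p x y z⟩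
end

section
/- Let M be a McCarthy algebra. The following are equivalent: (i) M is commutative, i.e., x*y = y*x for all x, y; (ii) M satisfies right-distributivity (x+y)*z = x*z + y*z; (iii) M is right-bounded, i.e., x*0 = 0 for all x; (iv) M is orthocomplemented, i.e., x*x' = 0 for all x; (v) M satisfies right-absorption (x+y)*x = x. -/
section McCarthyAux

variable {M : Type*} [Monoid M] (n : M → M)

/-- De Morgan dual of the left-decomposition law, under right-boundedness. -/
theorem mc_A3dual'
    (invol : ∀ x : M, n (n x) = x)
    (ldecomp : ∀ x y : M, dadd n x 1 * y = dadd n (x * y) (n x * y))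
    (h3 : ∀ x : M, x * n 1 = n 1) :
    ∀ a c : M, dadd n a c * dadd n (n a) c = c := by
  have plus1 : ∀ x : M, dadd n x 1 = 1 := fun x => by simp [dadd, h3, invol]
  have A3 : ∀ a b : M, dadd n (a * b) (n a * b) = b := fun a b => by
    rw [← ldecomp, plus1, one_mul]
  have negdadd : ∀ a b : M, n (dadd n a b) = n a * n b := fun a b => invol _
  have A3dual : ∀ a c : M, dadd n (n a) c * dadd n a c = c := fun a c => by
    have h := congrArg n (A3 a (n c))
    rw [negdadd, invol] at h
    simpa [dadd, invol] using h
  intro a c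
  have h := A3dual (n a) c
  rwa [invol] at h

/-- Orthocomplementation follows from right-boundedness. -/
theorem mc_ortho
    (invol : ∀ x : M, n (n x) = x)
    (ldecomp : ∀ x y : M, dadd n x 1 * y = dadd n (x * y) (n x * y))
    (h3 : ∀ x : M, x * n 1 = n 1) :
    ∀ x : M, x * n x = n 1 := by
  have add_zero : ∀ x : M, dadd n x (n 1) = x := fun x => by simp [dadd, invol]
  intro x
  have h := mc_A3dual' n invol ldecomp h3 x (n 1)
  rwa [add_zero, add_zero] at h

/-- Commutativity follows from right-boundedness. -/
theorem mc_comm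
    (invol : ∀ x : M, n (n x) = x)
    (ldist : ∀ x y z : M, x * dadd n y z = dadd n (x * y) (x * z))
    (ldecomp : ∀ x y : M, dadd n x 1 * y = dadd n (x * y) (n x * y))
    (h3 : ∀ x : M, x * n 1 = n 1) :
    ∀ x y : M, x * y = y * x := by
  have A3dual' := mc_A3dual' n invol ldecomp h3
  have ortho := mc_ortho n invol ldecomp h3
  have add_zero : ∀ x : M, dadd n x (n 1) = x := fun x => by simp [dadd, invol]
  have zero_add : ∀ x : M, dadd n (n 1) x = x := fun x => by simp [dadd, invol]
  have plus1 : ∀ x : M, dadd n x 1 = 1 := fun x => by simp [dadd, h3, invol]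
  have A3 : ∀ a b : M, dadd n (a * b) (n a * b) = b := fun a b => by
    rw [← ldecomp, plus1, one_mul]
  -- the key lemma: x * y * x' = 0
  have C : ∀ x y : M, x * y * n x = n 1 := fun x y => by
    have h : x * (dadd n y (n x) * dadd n (n y) (n x)) = x * n x := by
      rw [A3dual']
    rw [← mul_assoc, ldist x y (n x), ortho x, add_zero,
        ldist (x * y) (n y) (n x), mul_assoc x y (n y), ortho y, h3 x,
        zero_add] at h
    exact h
  have plus1' : ∀ b : M, dadd n b (n b) = 1 := fun b => by
    have h := ldecomp b 1
    simp only [mul_one] at h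
    rw [plus1] at h
    exact h.symm
  have decomp_right : ∀ a b : M, dadd n (a * b) (a * n b) = a := fun a b => by
    rw [← ldist, plus1', mul_one]
  have L1 : ∀ x y : M, x * y = x * y * x := fun x y => by
    have h : x * dadd n (y * x) (y * n x) = x * y := by rw [decomp_right]
    rw [ldist x (y * x) (y * n x), ← mul_assoc, ← mul_assoc, C, add_zero] at h
    exact h.symm
  have L2 : ∀ x y : M, y * x = x * y * x := fun x y => by
    have hc : n x * (y * x) = n 1 := by
      have h := C (n x) y
      rwa [invol, mul_assoc] at h
    have h := A3 x (y * x)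
    rw [hc, ← mul_assoc, add_zero] at h
    exact h.symm
  intro x y
  rw [L1 x y]
  exact (L2 x y).symm

end McCarthyAux

/-- Let `M` be a McCarthy algebra. The following are equivalent:
(i) `M` is commutative; (ii) right-distributivity `(x+y)*z = x*z + y*z`;
(iii) right-boundedness `x*0 = 0`; (iv) orthocomplementation `x*x' = 0`;
(v) right-absorption `(x+y)*x = x`. -/
theorem stmt_11 {M : Type*} [Monoid M] (n : M → M)
    (idem : ∀ x : M, x * x = x)
    (invol : ∀ x : M, n (n x) = x)
    (ldist : ∀ x y z : M, x * dadd n y z = dadd n (x * y) (x * z))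
    (ldecomp : ∀ x y : M, dadd n x 1 * y = dadd n (x * y) (n x * y))
    (lbdd : ∀ x : M, n 1 * x = n 1)
    (lucomm : ∀ x y : M, dadd n x 1 * dadd n y 1 = dadd n y 1 * dadd n x 1) :
    List.TFAE [
      (∀ x y : M, x * y = y * x),
      (∀ x y z : M, dadd n x y * z = dadd n (x * z) (y * z)),
      (∀ x : M, x * n 1 = n 1),
      (∀ x : M, x * n x = n 1),
      (∀ x y : M, dadd n x y * x = x)] := by
  tfae_have 1 → 2 := by
    intro h1 x y z
    rw [← h1 z (dadd n x y), ldist, h1 z x, h1 z y]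
  tfae_have 2 → 5 := by
    intro h2 x y
    have one_add : dadd n 1 y = 1 := by simp [dadd, lbdd, invol]
    have h := h2 1 y x
    rw [one_add, one_mul] at h
    rw [h2, idem]
    exact h.symm
  tfae_have 5 → 3 := by
    intro h5 x
    have zero_add : dadd n (n 1) x = x := by simp [dadd, invol]
    have h := h5 (n 1) x
    rwa [zero_add] at h
  tfae_have 3 → 1 := fun h3 => mc_comm n invol ldist ldecomp h3
  tfae_have 3 → 4 := fun h3 => mc_ortho n invol ldecomp h3
  tfae_have 4 → 3 := by
    intro h4 x
    calc x * n 1 = x * (x * n x) := by rw [h4]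
      _ = x * x * n x := by rw [mul_assoc]
      _ = x * n x := by rw [idem]
      _ = n 1 := h4 x
  tfae_finish
end

section
/- Let M be a McCarthy algebra and fix a ∈ M. The relation Θ_a on M defined by x Θ_a y iff a*x = a*y is a congruence of M containing the pair (a, 1): it is an equivalence relation; a*x = a*y implies a*x' = a*y'; a*x = a*y and a*u = a*v together imply a*(x*u) = a*(y*v); and a*a = a*1. Moreover Θ_a is the least such congruence: for every equivalence relation R on M that is compatible with * and with ' and satisfies R a 1, a*x = a*y implies R x y. Furthermore, Θ_a is also the least congruence containing the pair (a', 0). -/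
section Aux

variable {M : Type*} [Monoid M] (n : M → M)

theorem aux_na (invol : ∀ x : M, n (n x) = x)
    (ldecomp : ∀ x y : M, dadd n x 1 * y = dadd n (x * y) (n x * y)) (a : M) :
    a * n a = a * n 1 := by
  have h := ldecomp (n a) 1
  simp only [mul_one] at h
  have h2 := congrArg n h
  simp only [dadd, invol] at h2
  -- h2 should be : a * n 1 = a * n a
  exact h2.symm

theorem aux_K (invol : ∀ x : M, n (n x) = x)
    (ldist : ∀ x y z : M, x * dadd n y z = dadd n (x * y) (x * z))
    (ldecomp : ∀ x y : M, dadd n x 1 * y = dadd n (x * y) (n x * y)) (a s : M) :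
    a * n (a * s) = a * n s := by
  have h1 : n (a * s) = dadd n (n a) (n s) := by simp [dadd, invol]
  rw [h1, ldist, aux_na n invol ldecomp a, ← ldist]
  simp [dadd, invol]

theorem aux_least (invol : ∀ x : M, n (n x) = x)
    (idem : ∀ x : M, x * x = x)
    (ldecomp : ∀ x y : M, dadd n x 1 * y = dadd n (x * y) (n x * y))
    (lbdd : ∀ x : M, n 1 * x = n 1) (a : M)
    (R : M → M → Prop) (hR : Equivalence R)
    (mulc : ∀ x y u v : M, R x y → R u v → R (x * u) (y * v))
    (nc : ∀ x y : M, R x y → R (n x) (n y))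
    (ha : R a 1) : ∀ x y : M, a * x = a * y → R x y := by
  have hna1 : R (n a) (n 1) := nc _ _ ha
  have hm : R (n a * n 1) (n 1) := by
    have := mulc _ _ _ _ hna1 (hR.refl (n 1))
    rwa [idem (n 1)] at this
  have hP : R (dadd n a 1) 1 := by
    have := nc _ _ hm
    simpa [dadd, invol] using this
  have step1 : ∀ z : M, R z (dadd n a 1 * z) := fun z => by
    have := mulc _ _ _ _ hP (hR.refl z)
    rw [one_mul] at this
    exact hR.symm this
  have step2 : ∀ z : M, R (dadd n a 1 * z) (a * z) := fun z => by
    rw [ldecomp]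
    have h1 : R (n a * z) (n 1) := by
      have := mulc _ _ _ _ hna1 (hR.refl z)
      rwa [lbdd z] at this
    have h2 : R (n (n a * z)) (n (n 1)) := nc _ _ h1
    have h3 : R (n (a * z) * n (n a * z)) (n (a * z) * n (n 1)) :=
      mulc _ _ _ _ (hR.refl _) h2
    have h4 := nc _ _ h3
    simpa [dadd, invol] using h4
  intro x y hxy
  have hx : R x (a * x) := hR.trans (step1 x) (step2 x)
  have hy : R y (a * y) := hR.trans (step1 y) (step2 y)
  have hfin : R (a * x) y := by rw [hxy]; exact hR.symm hy
  exact hR.trans hx hfin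

end Aux

/-- Let `M` be a McCarthy algebra and `a ∈ M`. The relation `Θ_a` defined by
`x Θ_a y iff a*x = a*y` is a congruence of `M` containing the pair `(a, 1)`, it is
the least such congruence, and it is also the least congruence containing `(a', 0)`. -/
theorem stmt_12 {M : Type*} [Monoid M] (n : M → M)
    (idem : ∀ x : M, x * x = x)
    (invol : ∀ x : M, n (n x) = x)
    (ldist : ∀ x y z : M, x * dadd n y z = dadd n (x * y) (x * z))
    (ldecomp : ∀ x y : M, dadd n x 1 * y = dadd n (x * y) (n x * y))
    (lbdd : ∀ x : M, n 1 * x = n 1)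
    (lucomm : ∀ x y : M, dadd n x 1 * dadd n y 1 = dadd n y 1 * dadd n x 1)
    (a : M) :
    Equivalence (fun x y : M => a * x = a * y) ∧
    (∀ x y : M, a * x = a * y → a * n x = a * n y) ∧
    (∀ x y u v : M, a * x = a * y → a * u = a * v → a * (x * u) = a * (y * v)) ∧
    (a * a = a * 1) ∧
    (∀ R : M → M → Prop, Equivalence R →
      (∀ x y u v : M, R x y → R u v → R (x * u) (y * v)) →
      (∀ x y : M, R x y → R (n x) (n y)) →
      R a 1 → ∀ x y : M, a * x = a * y → R x y) ∧
    (a * n a = a * n 1) ∧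
    (∀ R : M → M → Prop, Equivalence R →
      (∀ x y u v : M, R x y → R u v → R (x * u) (y * v)) →
      (∀ x y : M, R x y → R (n x) (n y)) →
      R (n a) (n 1) → ∀ x y : M, a * x = a * y → R x y) := by
  have K := aux_K n invol ldist ldecomp a
  have ncompat : ∀ x y : M, a * x = a * y → a * n x = a * n y := by
    intro x y hxy
    rw [← K x, hxy, K y]
  refine ⟨⟨fun _ => rfl, Eq.symm, Eq.trans⟩, ncompat, ?_, ?_, ?_, ?_, ?_⟩
  · intro x y u v hxy huv
    have hx' := ncompat x y hxy
    have hu' := ncompat u v huv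
    calc a * (x * u) = a * n (dadd n (n x) (n u)) := by simp [dadd, invol]
      _ = a * n (a * dadd n (n x) (n u)) := (K _).symm
      _ = a * n (dadd n (a * n x) (a * n u)) := by rw [ldist]
      _ = a * n (dadd n (a * n y) (a * n v)) := by rw [hx', hu']
      _ = a * n (a * dadd n (n y) (n v)) := by rw [ldist]
      _ = a * n (dadd n (n y) (n v)) := K _
      _ = a * (y * v) := by simp [dadd, invol]
  · rw [idem, mul_one]
  · intro R hR mulc nc ha
    exact aux_least n invol idem ldecomp lbdd a R hR mulc nc ha
  · exact aux_na n invol ldecomp a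
  · intro R hR mulc nc ha
    have ha' : R a 1 := by
      have := nc _ _ ha
      rwa [invol, invol] at this
    exact aux_least n invol idem ldecomp lbdd a R hR mulc nc ha'
end

section
/- In any McCarthy algebra the relation x ≤ y defined by x + y = y is a partial order, and multiplication is order-preserving: if x ≤ u and y ≤ v then x*y ≤ u*v. -/
/-- In any McCarthy algebra the relation `x ≤ y` defined by `x + y = y` is a
partial order, and multiplication is order-preserving: `x ≤ u` and `y ≤ v`
imply `x*y ≤ u*v`. -/
theorem stmt_13 {M : Type*} [Monoid M] (n : M → M)
    (idem : ∀ x : M, x * x = x)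
    (invol : ∀ x : M, n (n x) = x)
    (ldist : ∀ x y z : M, x * dadd n y z = dadd n (x * y) (x * z))
    (ldecomp : ∀ x y : M, dadd n x 1 * y = dadd n (x * y) (n x * y))
    (lbdd : ∀ x : M, n 1 * x = n 1)
    (lucomm : ∀ x y : M, dadd n x 1 * dadd n y 1 = dadd n y 1 * dadd n x 1) :
    (∀ x : M, dadd n x x = x) ∧
    (∀ x y : M, dadd n x y = y → dadd n y x = x → x = y) ∧
    (∀ x y z : M, dadd n x y = y → dadd n y z = z → dadd n x z = z) ∧
    (∀ x y u v : M, dadd n x u = u → dadd n y v = v →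
      dadd n (x * y) (u * v) = u * v) := by
  have nn := invol
  have ninj : ∀ a b : M, n a = n b → a = b := by
    intro a b h
    have := congrArg n h
    rwa [nn, nn] at this
  have dm1 : ∀ a b : M, n (a * b) = dadd n (n a) (n b) := by
    intro a b; simp [dadd, nn]
  have dm2 : ∀ a b : M, n (dadd n a b) = n a * n b := by
    intro a b; simp [dadd, nn]
  have addAssoc : ∀ a b c : M, dadd n (dadd n a b) c = dadd n a (dadd n b c) := by
    intro a b c; simp [dadd, nn, mul_assoc]
  have addIdem : ∀ a : M, dadd n a a = a := by
    intro a; simp [dadd, idem, nn]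
  have addZero : ∀ a : M, dadd n a (n 1) = a := by
    intro a; simp [dadd, nn]
  have oneAdd : ∀ a : M, dadd n 1 a = 1 := by
    intro a; simp [dadd, nn, lbdd]
  -- dual right distributivity: x + (y*z) = (x+y)(x+z)
  have rdist : ∀ a b c : M, dadd n a (b * c) = dadd n a b * dadd n a c := by
    intro a b c
    have h := congrArg n (ldist (n a) (n b) (n c))
    simp only [dadd, nn] at h ⊢
    exact h
  -- A : x + c = (x+1)(x+c)
  have A : ∀ a c : M, dadd n a c = dadd n a 1 * dadd n a c := by
    intro a c
    have h := rdist a 1 c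
    rwa [one_mul] at h
  -- absorption: a + a*w = a
  have abs1 : ∀ a w : M, dadd n a (a * w) = a := by
    intro a w
    have h := ldist a 1 w
    rw [oneAdd, mul_one] at h
    exact h.symm
  -- a * (a + b) = a
  have mulabs : ∀ a b : M, a * dadd n a b = a := by
    intro a b
    rw [ldist, idem, abs1]
  -- a + a'*c = a + c
  have lem12 : ∀ a c : M, dadd n a (n a * c) = dadd n a c := by
    intro a c
    have e1 : dadd n a (dadd n a 1 * c) = dadd n a (n a * c) := by
      rw [ldecomp, ← addAssoc, abs1]
    have e2 : dadd n a (dadd n a 1 * c) = dadd n a c := by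
      rw [rdist, ← addAssoc, addIdem, ← A]
    rw [← e1]; exact e2
  -- a * (a' + c) = a * c
  have lem13 : ∀ a c : M, a * dadd n (n a) c = a * c := by
    intro a c
    have h := congrArg n (lem12 (n a) (n c))
    simp only [dadd, nn] at h ⊢
    exact h
  -- a' * (a + c) = a' * c
  have lem28 : ∀ a c : M, n a * dadd n a c = n a * c := by
    intro a c
    have h := lem13 (n a) c
    rwa [nn] at h
  -- a * a' = a * 0
  have lem16 : ∀ a : M, a * n a = a * n 1 := by
    intro a
    conv_lhs => rw [← addZero (n a)]
    exact lem13 a (n 1)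
  -- law R : (a + b) * c = a*c + a' * (b*c)
  have lemR : ∀ a b c : M, dadd n a b * c = dadd n (a * c) (n a * (b * c)) := by
    intro a b c
    calc dadd n a b * c
        = (dadd n a 1 * dadd n a b) * c := by rw [← A]
      _ = dadd n a 1 * (dadd n a b * c) := by rw [mul_assoc]
      _ = dadd n (a * (dadd n a b * c)) (n a * (dadd n a b * c)) := ldecomp _ _
      _ = dadd n ((a * dadd n a b) * c) ((n a * dadd n a b) * c) := by
            rw [← mul_assoc, ← mul_assoc]
      _ = dadd n (a * c) ((n a * b) * c) := by rw [mulabs, lem28]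
      _ = dadd n (a * c) (n a * (b * c)) := by rw [mul_assoc]
  -- u*v + u'*0 = u*v
  have lem59 : ∀ u v : M, dadd n (u * v) (n u * n 1) = u * v := by
    intro u v
    have h := lemR u (n 1) v
    rw [addZero, lbdd] at h
    exact h.symm
  -- (a+c)(a'+1) = a+c
  have lem57 : ∀ a c : M, dadd n a c * dadd n (n a) 1 = dadd n a c := by
    intro a c
    have h := congrArg n (lem59 (n a) (n c))
    simp only [dadd, nn] at h ⊢
    exact h
  refine ⟨addIdem, ?_, ?_, ?_⟩
  · -- antisymmetry
    intro x y h1 h2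
    have f1 : x * y = x := by rw [← h1]; exact mulabs x y
    have f2 : y * x = y := by rw [← h2]; exact mulabs y x
    have f5 : n x * n y = n y := by rw [← dm2 x y, h1]
    have f6 : n y * n x = n x := by rw [← dm2 y x, h2]
    have f7 : dadd n (n x) (n y) = n x := by rw [← dm1 x y, f1]
    have f8 : dadd n (n y) (n x) = n y := by rw [← dm1 y x, f2]
    have f3 : dadd n (x * n y) x = x := by
      have h := lem57 y x
      rw [h2, ldist x (n y) 1, mul_one] at h
      exact h
    have f4 : dadd n (y * n x) y = y := by
      have h := lem57 x y
      rw [h1, ldist y (n x) 1, mul_one] at h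
      exact h
    have key47 : dadd n x 1 = dadd n y 1 := by
      have h := lucomm x y
      rw [ldecomp x (dadd n y 1), ldecomp y (dadd n x 1),
          ldist x y 1, ldist y x 1, mul_one, mul_one, f1, f2, addIdem, addIdem,
          lem12 x (dadd n y 1), lem12 y (dadd n x 1),
          ← addAssoc x y 1, ← addAssoc y x 1, h1, h2] at h
      exact h.symm
    have e48 : n y * n 1 = n x * n 1 := by
      have h := congrArg n key47
      rw [dm2, dm2] at h
      exact h.symm
    have key54 : dadd n (n y) x = dadd n (n x) y := by
      have h := lucomm (n x) (n y)
      rw [ldecomp (n x) (dadd n (n y) 1), ldecomp (n y) (dadd n (n x) 1)] at h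
      simp only [nn] at h
      rw [ldist (n x) (n y) 1, ldist x (n y) 1, ldist (n y) (n x) 1,
          ldist y (n x) 1, mul_one, mul_one, mul_one, mul_one] at h
      rw [f5, f6, f3, f4] at h
      rw [f7, f8] at h
      exact h
    have e16' : n y * y = n y * n 1 := by
      have h := lem16 (n y)
      rwa [nn] at h
    have hy' : n y = n x := by
      have h : n y * dadd n (n y) x = n y * dadd n (n x) y := by rw [key54]
      rw [ldist (n y) (n y) x, ldist (n y) (n x) y, idem, f6] at h
      rw [e16', e48, abs1, abs1] at h
      exact h
    exact ninj x y hy'.symm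
  · -- transitivity
    intro x y z hxy hyz
    rw [← hyz, ← addAssoc, hxy]
  · -- monotonicity
    intro x y u v hx hy
    have L : dadd n (u * y) (u * v) = u * v := by
      rw [← ldist, hy]
    have Rm : dadd n (x * y) (u * y) = u * y := by
      have h := lemR x u y
      rw [hx] at h
      calc dadd n (x * y) (u * y)
          = dadd n (x * y) (dadd n (x * y) (n x * (u * y))) := by rw [← h]
        _ = dadd n (dadd n (x * y) (x * y)) (n x * (u * y)) := by rw [← addAssoc]
        _ = dadd n (x * y) (n x * (u * y)) := by rw [addIdem]
        _ = u * y := h.symm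
    calc dadd n (x * y) (u * v)
        = dadd n (x * y) (dadd n (u * y) (u * v)) := by rw [L]
      _ = dadd n (dadd n (x * y) (u * y)) (u * v) := by rw [← addAssoc]
      _ = dadd n (u * y) (u * v) := by rw [Rm]
      _ = u * v := L
end

section
/- In any McCarthy algebra, with x ≤ y meaning x + y = y: if x ≤ u and y ≤ u then x + y = y + x. Moreover, every element b is a multiplicative right unit on its principal downset: x ≤ b implies x*b = x. -/
/-- In any McCarthy algebra, with `x ≤ y` meaning `x + y = y`: if `x ≤ u` and
`y ≤ u` then `x + y = y + x`; moreover `x ≤ b` implies `x*b = x`. -/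
theorem stmt_14 {M : Type*} [Monoid M] (n : M → M)
    (idem : ∀ x : M, x * x = x)
    (invol : ∀ x : M, n (n x) = x)
    (ldist : ∀ x y z : M, x * dadd n y z = dadd n (x * y) (x * z))
    (ldecomp : ∀ x y : M, dadd n x 1 * y = dadd n (x * y) (n x * y))
    (lbdd : ∀ x : M, n 1 * x = n 1)
    (lucomm : ∀ x y : M, dadd n x 1 * dadd n y 1 = dadd n y 1 * dadd n x 1) :
    (∀ x y u : M, dadd n x u = u → dadd n y u = u → dadd n x y = dadd n y x) ∧
    (∀ x b : M, dadd n x b = b → x * b = x) := by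
  -- basic facts
  have nmul : ∀ x y : M, n (x * y) = dadd n (n x) (n y) := by
    intro x y; simp [dadd, invol]
  have nadd : ∀ x y : M, n (dadd n x y) = n x * n y := by
    intro x y; simp [dadd, invol]
  have aidem : ∀ x : M, dadd n x x = x := by
    intro x; simp [dadd, idem, invol]
  have aassoc : ∀ x y z : M, dadd n (dadd n x y) z = dadd n x (dadd n y z) := by
    intro x y z; simp [dadd, invol, mul_assoc]
  have one_add : ∀ x : M, dadd n 1 x = 1 := by
    intro x; simp [dadd, lbdd, invol]
  have add_zero' : ∀ x : M, dadd n x (n 1) = x := by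
    intro x; simp [dadd, invol]
  have zero_add' : ∀ x : M, dadd n (n 1) x = x := by
    intro x; simp [dadd, invol]
  -- absorption A : x + x*y = x
  have A : ∀ x y : M, dadd n x (x * y) = x := by
    intro x y
    have h1 : x * dadd n 1 y = dadd n (x * 1) (x * y) := ldist x 1 y
    rw [one_add, mul_one] at h1
    exact h1.symm
  -- A' : x * (x + y) = x
  have A' : ∀ x y : M, x * dadd n x y = x := by
    intro x y
    have h := congrArg n (A (n x) (n y))
    simp only [dadd, invol] at h ⊢
    exact h
  -- dual decomposition D : x*0 + y = (x+y) * (x'+y)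
  have D : ∀ x y : M, dadd n (x * n 1) y = dadd n x y * dadd n (n x) y := by
    intro x y
    have h := congrArg n (ldecomp (n x) (n y))
    simp only [dadd, invol] at h ⊢
    exact h
  -- x + x' = x + 1
  have xnx : ∀ x : M, dadd n x (n x) = dadd n x 1 := by
    intro x
    have h := ldecomp x 1
    rw [mul_one, mul_one, mul_one] at h
    exact h.symm
  -- Z : x*0 + x = x
  have Z : ∀ x : M, dadd n (x * n 1) x = x := by
    intro x
    have h1 : x * dadd n (n 1) 1 = dadd n (x * n 1) (x * 1) := ldist x (n 1) 1
    rw [zero_add', mul_one] at h1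
    exact h1.symm
  -- R'' : x*x' + x*y = x*y
  have R'' : ∀ x y : M, dadd n (x * n x) (x * y) = x * y := by
    intro x y
    have h0 : dadd n (x * n 1) (x * y) = x * y := by
      have h1 : x * dadd n (n 1) y = dadd n (x * n 1) (x * y) := ldist x (n 1) y
      rw [zero_add'] at h1
      exact h1.symm
    have h2 : dadd n (x * n 1) (x * y) = dadd n x (x * y) * dadd n (n x) (x * y) :=
      D x (x * y)
    rw [A] at h2
    have h3 : x * dadd n (n x) (x * y) = dadd n (x * n x) (x * (x * y)) :=
      ldist x (n x) (x * y)
    rw [← mul_assoc, idem] at h3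
    rw [h2, h3] at h0
    exact h0
  -- R' : x * (x' + y) = x * y
  have R' : ∀ x y : M, x * dadd n (n x) y = x * y := by
    intro x y
    rw [ldist x (n x) y]
    exact R'' x y
  -- R : x + x'*y = x + y
  have R : ∀ x y : M, dadd n x (n x * y) = dadd n x y := by
    intro x y
    have h := congrArg n (R' (n x) (n y))
    simp only [dadd, invol] at h ⊢
    exact h
  -- goal 2 : x ≤ b → x*b = x
  have goal2 : ∀ x b : M, dadd n x b = b → x * b = x := by
    intro x b hb
    calc x * b = x * dadd n x b := by rw [hb]
    _ = x := A' x b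
  -- DD : x + y*z = (x+y)*(x+z)
  have DD : ∀ x y z : M, dadd n x (y * z) = dadd n x y * dadd n x z := by
    intro x y z
    have h := congrArg n (ldist (n x) (n y) (n z))
    simp only [dadd, invol] at h ⊢
    exact h
  -- x * x' = x * 0
  have xnx0 : ∀ x : M, x * n x = x * n 1 := by
    intro x
    have h := R' x (n 1)
    rwa [add_zero'] at h
  -- T' : x*x' + x = x
  have T' : ∀ x : M, dadd n (x * n x) x = x := by
    intro x
    have h2 := D x x
    rw [aidem] at h2
    have h3 : dadd n (n x) x = dadd n (n x) 1 := by
      have := xnx (n x); rwa [invol] at this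
    have h4 : x * dadd n (n x) 1 = dadd n (x * n x) x := by
      have := ldist x (n x) 1
      rwa [mul_one] at this
    calc dadd n (x * n x) x = x * dadd n (n x) 1 := h4.symm
      _ = x * dadd n (n x) x := by rw [h3]
      _ = dadd n (x * n 1) x := by rw [← h2]
      _ = x := Z x
  -- S : (x+1)*x = x
  have S : ∀ x : M, dadd n x 1 * x = x := by
    intro x
    have h := congrArg n (T' (n x))
    simp only [dadd, invol] at h
    have h2 : n x * x = n x * n 1 := by
      have := xnx0 (n x); rwa [invol] at this
    rw [h2] at h
    simp only [dadd]
    exact h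
  -- E : (x+1)*(x+y) = x+y
  have E : ∀ x y : M, dadd n x 1 * dadd n x y = dadd n x y := by
    intro x y
    calc dadd n x 1 * dadd n x y
        = dadd n (x * dadd n x y) (n x * dadd n x y) := ldecomp x (dadd n x y)
      _ = dadd n x (n x * dadd n x y) := by rw [A' x y]
      _ = dadd n x (dadd n x y) := R x (dadd n x y)
      _ = dadd n (dadd n x x) y := (aassoc x x y).symm
      _ = dadd n x y := by rw [aidem]
  -- GN : x*0 + x'*0 = x*0
  have GN : ∀ x : M, dadd n (x * n 1) (n x * n 1) = x * n 1 := by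
    intro x
    have h := D x (n x * n 1)
    have h1 : dadd n x (n x * n 1) = x := by
      have := R x (n 1); rwa [add_zero'] at this
    have h2 : dadd n (n x) (n x * n 1) = n x := A (n x) (n 1)
    rw [h1, h2, xnx0] at h
    exact h
  -- C* : (x+1)*w = x*0 + w
  have Cstar : ∀ x w : M, dadd n x 1 * w = dadd n (x * n 1) w := by
    intro x w
    have step1 : dadd n x 1 * dadd n (x * n 1) w = dadd n (x * n 1) w := by
      rw [D x w, ← mul_assoc, E x w]
    have step2 : dadd n x 1 * w = dadd n (x * n 1) (dadd n x 1 * w) := by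
      have l1 := ldist (dadd n x 1) (n 1) w
      rw [zero_add'] at l1
      have l2 : dadd n x 1 * n 1 = x * n 1 := by
        rw [ldecomp x (n 1)]; exact GN x
      rw [l2] at l1
      exact l1
    have step3 : dadd n (x * n 1) (dadd n x 1 * w)
        = dadd n x 1 * dadd n (x * n 1) w := by
      have dd := DD (x * n 1) (dadd n x 1) w
      have key : dadd n (x * n 1) (dadd n x 1) = dadd n x 1 := by
        calc dadd n (x * n 1) (dadd n x 1)
            = dadd n (x * n x) (dadd n x (n x)) := by rw [xnx0, xnx]
          _ = dadd n (dadd n (x * n x) x) (n x) := (aassoc _ x (n x)).symm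
          _ = dadd n x (n x) := by rw [T']
          _ = dadd n x 1 := xnx x
      rw [key] at dd
      exact dd
    calc dadd n x 1 * w = dadd n (x * n 1) (dadd n x 1 * w) := step2
      _ = dadd n x 1 * dadd n (x * n 1) w := step3
      _ = dadd n (x * n 1) w := step1
  -- RD : (x*0 + q)*w = x*0 + q*w
  have RD : ∀ x q w : M, dadd n (x * n 1) q * w = dadd n (x * n 1) (q * w) := by
    intro x q w
    rw [← Cstar x q, mul_assoc, Cstar x (q * w)]
  -- NEW1 : y' + x*y = y' + x
  have NEW1 : ∀ x y : M, dadd n (n y) (x * y) = dadd n (n y) x := by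
    intro x y
    have h1 : dadd n (n y) y = dadd n (n y) 1 := by
      have := xnx (n y); rwa [invol] at this
    calc dadd n (n y) (x * y) = dadd n (n y) x * dadd n (n y) y := DD (n y) x y
      _ = dadd n (n y) x * dadd n (n y) 1 := by rw [h1]
      _ = dadd n (n y) (x * 1) := (DD (n y) x 1).symm
      _ = dadd n (n y) x := by rw [mul_one]
  -- Q : x*y*x = x*y
  have Qlem : ∀ x y : M, x * y * x = x * y := by
    intro x y
    calc x * y * x = x * (y * x) := mul_assoc x y x
      _ = x * dadd n (n x) (y * x) := (R' x (y * x)).symm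
      _ = x * dadd n (n x) y := by rw [NEW1 y x]
      _ = x * y := R' x y
  -- Q1 : x*y + x*0 = x*y
  have Q1 : ∀ x y : M, dadd n (x * y) (x * n 1) = x * y := by
    intro x y
    have h1 : dadd n (x * y) x = x * dadd n y 1 := by
      have := ldist x y 1
      rw [mul_one] at this
      exact this.symm
    calc dadd n (x * y) (x * n 1)
        = dadd n (x * y) x * dadd n (x * y) (n 1) := DD (x * y) x (n 1)
      _ = dadd n (x * y) x * (x * y) := by rw [add_zero']
      _ = x * dadd n y 1 * (x * y) := by rw [h1]
      _ = x * (dadd n y 1 * (x * y)) := mul_assoc _ _ _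
      _ = x * dadd n (y * n 1) (x * y) := by rw [Cstar y (x * y)]
      _ = dadd n (x * (y * n 1)) (x * (x * y)) := ldist x (y * n 1) (x * y)
      _ = dadd n (x * y * n 1) (x * y) := by rw [← mul_assoc, ← mul_assoc, idem]
      _ = x * y := Z (x * y)
  -- CORE : p+1 = q+1 → p*q = q*p
  have CORE : ∀ p q : M, dadd n p 1 = dadd n q 1 → p * q = q * p := by
    intro p q hpq
    have g0 : p * n 1 = q * n 1 := by
      have e1 : dadd n p 1 * n 1 = p * n 1 := by
        rw [Cstar p (n 1), add_zero']
      have e2 : dadd n q 1 * n 1 = q * n 1 := by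
        rw [Cstar q (n 1), add_zero']
      rw [← e1, ← e2, hpq]
    have h4 : dadd n (p * q) (n p * q) = q := by
      have := ldecomp p q
      rw [hpq, S q] at this
      exact this.symm
    have hH : dadd n (p * q) q = q := by
      calc dadd n (p * q) q
          = dadd n (p * q) (dadd n (p * q) (n p * q)) := by rw [h4]
        _ = dadd n (dadd n (p * q) (p * q)) (n p * q) := (aassoc _ _ _).symm
        _ = dadd n (p * q) (n p * q) := by rw [aidem]
        _ = q := h4
    have hJ : dadd n (p * q) (q * n 1) = q * (p * q) := by
      calc dadd n (p * q) (q * n 1)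
          = dadd n (p * q) q * dadd n (p * q) (n 1) := DD (p * q) q (n 1)
        _ = q * (p * q) := by rw [hH, add_zero']
    calc p * q = dadd n (p * q) (p * n 1) := (Q1 p q).symm
      _ = dadd n (p * q) (q * n 1) := by rw [g0]
      _ = q * (p * q) := hJ
      _ = q * p * q := (mul_assoc q p q).symm
      _ = q * p := Qlem q p
  -- GG : b*0 + a*b = a*0 + b*a
  have GG : ∀ a b : M, dadd n (b * n 1) (a * b) = dadd n (a * n 1) (b * a) := by
    intro a b
    have hpq : dadd n (dadd n (a * n 1) b) 1 = dadd n (dadd n (b * n 1) a) 1 := by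
      have e1 : dadd n a 1 * dadd n b 1 = dadd n (dadd n (a * n 1) b) 1 := by
        rw [Cstar a (dadd n b 1)]
        exact (aassoc (a * n 1) b 1).symm
      have e2 : dadd n b 1 * dadd n a 1 = dadd n (dadd n (b * n 1) a) 1 := by
        rw [Cstar b (dadd n a 1)]
        exact (aassoc (b * n 1) a 1).symm
      rw [← e1, ← e2]
      exact lucomm a b
    have prodpq : ∀ c d : M,
        dadd n (c * n 1) d * dadd n (d * n 1) c = dadd n (c * n 1) (d * c) := by
      intro c d
      have hd : d * dadd n (d * n 1) c = d * c := by
        have l1 := ldist d (d * n 1) c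
        rw [← mul_assoc, idem] at l1
        have l2 := ldist d (n 1) c
        rw [zero_add'] at l2
        rw [l1, ← l2]
      rw [RD c d (dadd n (d * n 1) c), hd]
    calc dadd n (b * n 1) (a * b)
        = dadd n (b * n 1) a * dadd n (a * n 1) b := (prodpq b a).symm
      _ = dadd n (a * n 1) b * dadd n (b * n 1) a :=
          (CORE _ _ hpq).symm
      _ = dadd n (a * n 1) (b * a) := prodpq a b
  -- main commutativity
  refine ⟨?_, goal2⟩
  intro x y u hx hy
  set a := n x with hadef
  set b := n y with hbdef
  set v := n u with hvdef
  have ha : a * v = v := by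
    have := congrArg n hx
    rw [nadd] at this
    exact this
  have hb : b * v = v := by
    have := congrArg n hy
    rw [nadd] at this
    exact this
  have F1a : dadd n a v = a := by
    have := A a v; rwa [ha] at this
  have F1b : dadd n b v = b := by
    have := A b v; rwa [hb] at this
  have F2a : dadd n a b * a = a := by
    have h := DD a b v
    rw [hb, F1a] at h
    exact h.symm
  have F2b : dadd n b a * b = b := by
    have h := DD b a v
    rw [ha, F1b] at h
    exact h.symm
  have F2c : dadd n b (a * b) = b := by
    calc dadd n b (a * b) = dadd n b a * dadd n b b := DD b a b
      _ = dadd n b a * b := by rw [aidem]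
      _ = b := F2b
  have F2d : dadd n a (b * a) = a := by
    calc dadd n a (b * a) = dadd n a b * dadd n a a := DD a b a
      _ = dadd n a b * a := by rw [aidem]
      _ = a := F2a
  have F3 : dadd n (b * n 1) (a * b) = b * (a * b) := by
    calc dadd n (b * n 1) (a * b)
        = dadd n b (a * b) * dadd n (n b) (a * b) := D b (a * b)
      _ = b * dadd n (n b) (a * b) := by rw [F2c]
      _ = b * (a * b) := R' b (a * b)
  have F3' : dadd n (a * n 1) (b * a) = a * (b * a) := by
    calc dadd n (a * n 1) (b * a)
        = dadd n a (b * a) * dadd n (n a) (b * a) := D a (b * a)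
      _ = a * dadd n (n a) (b * a) := by rw [F2d]
      _ = a * (b * a) := R' a (b * a)
  have main : b * a = a * b := by
    calc b * a = b * a * b := (Qlem b a).symm
      _ = b * (a * b) := mul_assoc b a b
      _ = dadd n (b * n 1) (a * b) := F3.symm
      _ = dadd n (a * n 1) (b * a) := GG a b
      _ = a * (b * a) := F3'
      _ = a * b * a := (mul_assoc a b a).symm
      _ = a * b := Qlem a b
  show n (n x * n y) = n (n y * n x)
  rw [show n x * n y = a * b from rfl, show n y * n x = b * a from rfl, main]
end

section
/- In any McCarthy algebra M, with x ≤ y meaning x + y = y: (i) if x ≤ y*0 then x = x*0; (ii) if x ≤ x' then x = x*0; (iii) M has at most one involution fixed point, i.e., if e' = e and f' = f then e = f; (iv) if e' = e then e = e*0 = e+1 and, for every x, x*0 ≤ e, e*x = e, and e + x = e. -/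
/-- In any McCarthy algebra `M`, with `x ≤ y` meaning `x + y = y`:
(i) `x ≤ y*0` implies `x = x*0`; (ii) `x ≤ x'` implies `x = x*0`;
(iii) `M` has at most one involution fixed point;
(iv) if `e' = e` then `e = e*0 = e+1` and, for every `x`,
`x*0 ≤ e`, `e*x = e`, and `e + x = e`. -/
theorem stmt_15 {M : Type*} [Monoid M] (n : M → M)
    (idem : ∀ x : M, x * x = x)
    (invol : ∀ x : M, n (n x) = x)
    (ldist : ∀ x y z : M, x * dadd n y z = dadd n (x * y) (x * z))
    (ldecomp : ∀ x y : M, dadd n x 1 * y = dadd n (x * y) (n x * y))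
    (lbdd : ∀ x : M, n 1 * x = n 1)
    (lucomm : ∀ x y : M, dadd n x 1 * dadd n y 1 = dadd n y 1 * dadd n x 1) :
    (∀ x y : M, dadd n x (y * n 1) = y * n 1 → x = x * n 1) ∧
    (∀ x : M, dadd n x (n x) = n x → x = x * n 1) ∧
    (∀ e f : M, n e = e → n f = f → e = f) ∧
    (∀ e : M, n e = e →
      (e = e * n 1 ∧ e = dadd n e 1 ∧
        ∀ x : M, dadd n (x * n 1) e = e ∧ e * x = e ∧ dadd n e x = e)) := by
  -- 0 * 0 = 0
  have h00 : n 1 * n 1 = n 1 := lbdd (n 1)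
  -- 1 + a = 1
  have h1add : ∀ a : M, dadd n 1 a = 1 := by
    intro a
    show n (n 1 * n a) = 1
    rw [lbdd, invol]
  -- a + 0 = a
  have hadd0 : ∀ a : M, dadd n a (n 1) = a := by
    intro a
    show n (n a * n (n 1)) = a
    rw [invol, mul_one, invol]
  -- Lemma C : a * 0 = a * a'
  have hC : ∀ a : M, a * n 1 = a * n a := by
    intro a
    have h := ldecomp (n a) 1
    simp only [mul_one, dadd, invol] at h
    have h2 := congrArg n h
    simpa [invol] using h2
  -- star law : a + b*c = (a+b)*(a+c)
  have hstar : ∀ a b c : M, dadd n a (b * c) = dadd n a b * dadd n a c := by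
    intro a b c
    have h2 := ldist (n a) (n b) (n c)
    have h3 : dadd n (n b) (n c) = n (b * c) := by simp only [dadd, invol]
    rw [h3] at h2
    show n (n a * n (b * c)) = n (n a * n b) * n (n a * n c)
    rw [h2]
    simp only [dadd, invol]
  -- dual of lucomm : a*0 + b*0 = b*0 + a*0
  have f9 : ∀ a b : M, dadd n (a * n 1) (b * n 1) = dadd n (b * n 1) (a * n 1) := by
    intro a b
    have h := lucomm (n a) (n b)
    have ha : ∀ c : M, dadd n (n c) 1 = n (c * n 1) := by
      intro c; simp only [dadd, invol]
    rw [ha a, ha b] at h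
    exact congrArg n h
  -- part (i)
  have part1 : ∀ x y : M, dadd n x (y * n 1) = y * n 1 → x = x * n 1 := by
    intro a y h
    -- a + a*b = a
    have haz : ∀ b : M, dadd n a (a * b) = a := by
      intro b
      have h1 := ldist a 1 b
      rw [h1add b, mul_one] at h1
      exact h1.symm
    have h' : dadd n a y * a = y * n 1 := by
      have hs : dadd n a (y * n 1) = dadd n a y * dadd n a (n 1) := hstar a y (n 1)
      rw [hadd0 a] at hs
      rw [← hs]; exact h
    have key : a * (y * n 1) = a := by
      calc a * (y * n 1) = a * (dadd n a y * a) := by rw [h']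
        _ = (a * dadd n a y) * a := by rw [mul_assoc]
        _ = dadd n (a * a) (a * y) * a := by rw [ldist]
        _ = dadd n a (a * y) * a := by rw [idem]
        _ = a * a := by rw [haz y]
        _ = a := idem a
    calc a = a * (y * n 1) := key.symm
      _ = a * (y * (n 1 * n 1)) := by rw [h00]
      _ = (a * (y * n 1)) * n 1 := by rw [← mul_assoc y, ← mul_assoc]
      _ = a * n 1 := by rw [key]
  -- part (ii)
  have part2 : ∀ x : M, dadd n x (n x) = n x → x = x * n 1 := by
    intro x h
    have h1 : n (n x * x) = n x := by
      have he : dadd n x (n x) = n (n x * x) := by simp only [dadd, invol]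
      rw [← he]; exact h
    have h2 : n x * x = x := by
      have h3 := congrArg n h1
      simpa [invol] using h3
    have h4 : x = n x * n 1 := by
      rw [hC (n x), invol]; exact h2.symm
    calc x = n x * n 1 := h4
      _ = n x * (n 1 * n 1) := by rw [h00]
      _ = (n x * n 1) * n 1 := by rw [mul_assoc]
      _ = x * n 1 := by rw [← h4]
  -- part (iv)
  have part4 : ∀ e : M, n e = e →
      (e = e * n 1 ∧ e = dadd n e 1 ∧
        ∀ x : M, dadd n (x * n 1) e = e ∧ e * x = e ∧ dadd n e x = e) := by
    intro e he
    have hee : dadd n e (n e) = n e := by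
      rw [he]; show n (n e * n e) = e
      rw [idem, invol]
    have he0 : e = e * n 1 := part2 e hee
    have hleft : ∀ s : M, e * s = e := by
      intro s
      calc e * s = (e * n 1) * s := by rw [← he0]
        _ = e * (n 1 * s) := mul_assoc _ _ _
        _ = e * n 1 := by rw [lbdd]
        _ = e := he0.symm
    have headd : ∀ t : M, dadd n e t = e := by
      intro t
      show n (n e * n t) = e
      rw [he, hleft, he]
    refine ⟨he0, ?_, ?_⟩
    · show e = n (n e * n 1)
      rw [he, ← he0, he]
    · intro x
      refine ⟨?_, hleft x, headd x⟩
      calc dadd n (x * n 1) e = dadd n (x * n 1) (e * n 1) := by rw [← he0]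
        _ = dadd n (e * n 1) (x * n 1) := f9 x e
        _ = dadd n e (x * n 1) := by rw [← he0]
        _ = e := headd _
  -- part (iii)
  have part3 : ∀ e f : M, n e = e → n f = f → e = f := by
    intro e f he hf
    have h1 : dadd n e f = e := ((part4 e he).2.2 f).2.2
    have h2 : dadd n (e * n 1) f = f := ((part4 f hf).2.2 e).1
    rw [← (part4 e he).1] at h2
    exact h1.symm.trans h2
  exact ⟨part1, part2, part3, part4⟩
end

section
/- Let M be a McCarthy algebra, with x ≤ y meaning x + y = y. For every i ∈ M with i = i*0 and every x ∈ M: one has i ≤ x and x ≤ i+1 if and only if x*0 = i. Consequently, every element x of M lies in exactly one interval [i, i+1] with i = i*0, namely the one indexed by i = x*0 (so if x also lies in [j, j+1] with j = j*0, then j = x*0). -/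
/-- Let `M` be a McCarthy algebra, with `x ≤ y` meaning `x + y = y`. For every
`i` with `i = i*0` and every `x`: `i ≤ x` and `x ≤ i+1` iff `x*0 = i`.
Consequently every element `x` lies in exactly one interval `[i, i+1]` with
`i = i*0`, namely the one indexed by `i = x*0`. -/
theorem stmt_17 {M : Type*} [Monoid M] (n : M → M)
    (idem : ∀ x : M, x * x = x)
    (invol : ∀ x : M, n (n x) = x)
    (ldist : ∀ x y z : M, x * dadd n y z = dadd n (x * y) (x * z))
    (ldecomp : ∀ x y : M, dadd n x 1 * y = dadd n (x * y) (n x * y))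
    (lbdd : ∀ x : M, n 1 * x = n 1)
    (lucomm : ∀ x y : M, dadd n x 1 * dadd n y 1 = dadd n y 1 * dadd n x 1) :
    (∀ i x : M, i = i * n 1 →
      ((dadd n i x = x ∧ dadd n x (dadd n i 1) = dadd n i 1) ↔ x * n 1 = i)) ∧
    (∀ x : M, x * n 1 = x * n 1 * n 1 ∧
      dadd n (x * n 1) x = x ∧
      dadd n x (dadd n (x * n 1) 1) = dadd n (x * n 1) 1) ∧
    (∀ x j : M, j = j * n 1 →
      dadd n j x = x → dadd n x (dadd n j 1) = dadd n j 1 → j = x * n 1) := by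
  have ldist' : ∀ x y z : M, x * n (n y * n z) = n (n (x * y) * n (x * z)) :=
    fun x y z => ldist x y z
  have ldecomp' : ∀ x y : M, n (n x * n 1) * y = n (n (x * y) * n (n x * y)) :=
    fun x y => ldecomp x y
  have lucomm' : ∀ x y : M, n (n x * n 1) * n (n y * n 1) = n (n y * n 1) * n (n x * n 1) :=
    fun x y => lucomm x y
  have lz : ∀ x y : M, (x * (n (1 : M))) * y = x * (n (1 : M)) := by
    intro x y
    calc (x * (n (1 : M))) * y
      _ = x * ((n (1 : M)) * y) := by conv_lhs => rw [mul_assoc x (n (1 : M)) y]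
      _ = x * (n (1 : M)) := by conv_lhs => enter [2]; rw [lbdd y]
  have addzl : ∀ x : M, n ((n (n (1 : M))) * (n x)) = x := by
    intro x
    calc n ((n (n (1 : M))) * (n x))
      _ = n ((1 : M) * (n x)) := by conv_lhs => enter [1, 1]; rw [invol (1 : M)]
      _ = n (n x) := by conv_lhs => enter [1]; rw [one_mul (n x)]
      _ = x := by conv_lhs => rw [invol x]
  have addidem : ∀ x : M, n ((n x) * (n x)) = x := by
    intro x
    calc n ((n x) * (n x))
      _ = n (n x) := by conv_lhs => enter [1]; rw [idem (n x)]
      _ = x := by conv_lhs => rw [invol x]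
  have e1x : ∀ x : M, (n ((n x) * (n (1 : M)))) * x = x := by
    intro x
    calc (n ((n x) * (n (1 : M)))) * x
      _ = n (n ((n ((n x) * (n (1 : M)))) * x)) := by conv_lhs => rw [← invol ((n ((n x) * (n (1 : M)))) * x)]
      _ = n (n ((n ((n x) * (n (1 : M)))) * (n ((n x) * (n x))))) := by conv_lhs => enter [1, 1, 2]; rw [← addidem x]
      _ = n ((n x) * (n ((n (n (1 : M))) * (n (n x))))) := by conv_lhs => enter [1]; rw [← ldist' (n x) (n (1 : M)) (n x)]
      _ = n ((n x) * (n x)) := by conv_lhs => enter [1, 2]; rw [addzl (n x)]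
      _ = x := by conv_lhs => rw [addidem x]
  have xe1 : ∀ x y : M, x * (n ((n y) * (n (1 : M)))) = n ((n (x * y)) * (n x)) := by
    intro x y
    calc x * (n ((n y) * (n (1 : M))))
      _ = n ((n (x * y)) * (n (x * (1 : M)))) := by conv_lhs => rw [ldist' x y (1 : M)]
      _ = n ((n (x * y)) * (n x)) := by conv_lhs => enter [1, 2, 1]; rw [mul_one x]
  have addassoc : ∀ x y z : M, n ((n (n ((n x) * (n y)))) * (n z)) = n ((n x) * (n (n ((n y) * (n z))))) := by
    intro x y z
    calc n ((n (n ((n x) * (n y)))) * (n z))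
      _ = n (((n x) * (n y)) * (n z)) := by conv_lhs => enter [1, 1]; rw [invol ((n x) * (n y))]
      _ = n ((n x) * ((n y) * (n z))) := by conv_lhs => enter [1]; rw [mul_assoc (n x) (n y) (n z)]
      _ = n ((n x) * (n (n ((n y) * (n z))))) := by conv_lhs => enter [1, 2]; rw [← invol ((n y) * (n z))]
  have d3 : ∀ x : M, n ((n x) * (n (1 : M))) = n ((n x) * (n (n x))) := by
    intro x
    calc n ((n x) * (n (1 : M)))
      _ = (n ((n x) * (n (1 : M)))) * (1 : M) := by conv_lhs => rw [← mul_one (n ((n x) * (n (1 : M))))]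
      _ = n ((n (x * (1 : M))) * (n ((n x) * (1 : M)))) := by conv_lhs => rw [ldecomp' x (1 : M)]
      _ = n ((n (x * (1 : M))) * (n (n x))) := by conv_lhs => enter [1, 2, 1]; rw [mul_one (n x)]
      _ = n ((n x) * (n (n x))) := by conv_lhs => enter [1, 1, 1]; rw [mul_one x]
  have tpb : ∀ x : M, n ((n (x * (n (1 : M)))) * (n x)) = x := by
    intro x
    calc n ((n (x * (n (1 : M)))) * (n x))
      _ = x * (n ((n (n (1 : M))) * (n (1 : M)))) := by conv_lhs => rw [← xe1 x (n (1 : M))]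
      _ = x * (1 : M) := by conv_lhs => enter [2]; rw [addzl (1 : M)]
      _ = x := by conv_lhs => rw [mul_one x]
  have g13 : ∀ x : M, n x = n ((n (n x)) * (n (x * (n (1 : M))))) := by
    intro x
    calc n x
      _ = (n ((n (n x)) * (n (1 : M)))) * (n x) := by conv_lhs => rw [← e1x (n x)]
      _ = (n ((n (n x)) * (n (n (n x))))) * (n x) := by conv_lhs => enter [1]; rw [d3 (n x)]
      _ = (n ((n (n x)) * (n x))) * (n x) := by conv_lhs => enter [1, 1, 2]; rw [invol (n x)]
      _ = (n (x * (n x))) * (n x) := by conv_lhs => enter [1, 1, 1]; rw [invol x]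
      _ = n (n ((n (x * (n x))) * (n x))) := by conv_lhs => rw [← invol ((n (x * (n x))) * (n x))]
      _ = n (x * (n ((n (n x)) * (n (1 : M))))) := by conv_lhs => enter [1]; rw [← xe1 x (n x)]
      _ = n (x * (n (x * (n (1 : M))))) := by conv_lhs => enter [1, 2, 1, 1]; rw [invol x]
      _ = n ((n (n x)) * (n (x * (n (1 : M))))) := by conv_lhs => enter [1, 1]; rw [← invol x]
  have g5eq : ∀ x : M, n ((n (x * (n x))) * (n (n ((n x) * (n (n x)))))) = n ((n x) * (n (n x))) := by
    intro x
    calc n ((n (x * (n x))) * (n (n ((n x) * (n (n x))))))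
      _ = n ((n (x * (n x))) * (n (n ((n x) * x)))) := by conv_lhs => enter [1, 2, 1, 1, 2]; rw [invol x]
      _ = n ((n (x * (n x))) * ((n x) * x)) := by conv_lhs => enter [1, 2]; rw [invol ((n x) * x)]
      _ = n (((n (x * (n x))) * (n x)) * x) := by conv_lhs => enter [1]; rw [← mul_assoc (n (x * (n x))) (n x) x]
      _ = n ((n (n ((n (x * (n x))) * (n x)))) * x) := by conv_lhs => enter [1, 1]; rw [← invol ((n (x * (n x))) * (n x))]
      _ = n ((n (x * (n ((n (n x)) * (n (1 : M)))))) * x) := by conv_lhs => enter [1, 1, 1]; rw [← xe1 x (n x)]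
      _ = n ((n (x * (n (x * (n (1 : M)))))) * x) := by conv_lhs => enter [1, 1, 1, 2, 1, 1]; rw [invol x]
      _ = n ((n ((n (n x)) * (n (x * (n (1 : M)))))) * x) := by conv_lhs => enter [1, 1, 1, 1]; rw [← invol x]
      _ = n ((n x) * x) := by conv_lhs => enter [1, 1]; rw [← g13 x]
      _ = n ((n x) * (n (n x))) := by conv_lhs => enter [1, 2]; rw [← invol x]
  have ab_a : ∀ x : M, (n ((n x) * (n (1 : M)))) * (n ((n (n x)) * (n (1 : M)))) = n ((n x) * (n (1 : M))) := by
    intro x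
    calc (n ((n x) * (n (1 : M)))) * (n ((n (n x)) * (n (1 : M))))
      _ = n ((n (x * (n ((n (n x)) * (n (1 : M)))))) * (n ((n x) * (n ((n (n x)) * (n (1 : M))))))) := by conv_lhs => rw [ldecomp' x (n ((n (n x)) * (n (1 : M))))]
      _ = n ((n (n ((n (x * (n x))) * (n x)))) * (n ((n x) * (n ((n (n x)) * (n (1 : M))))))) := by conv_lhs => enter [1, 1, 1]; rw [xe1 x (n x)]
      _ = n ((n (n ((n (x * (n x))) * (n x)))) * (n (n ((n ((n x) * (n x))) * (n (n x)))))) := by conv_lhs => enter [1, 2, 1]; rw [xe1 (n x) (n x)]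
      _ = n ((n (n ((n (x * (n x))) * (n x)))) * (n (n ((n (n x)) * (n (n x)))))) := by conv_lhs => enter [1, 2, 1, 1, 1, 1]; rw [idem (n x)]
      _ = n ((n (n ((n (x * (n x))) * (n x)))) * (n (n x))) := by conv_lhs => enter [1, 2, 1]; rw [addidem (n x)]
      _ = n (((n (x * (n x))) * (n x)) * (n (n x))) := by conv_lhs => enter [1, 1]; rw [invol ((n (x * (n x))) * (n x))]
      _ = n ((n (x * (n x))) * ((n x) * (n (n x)))) := by conv_lhs => enter [1]; rw [mul_assoc (n (x * (n x))) (n x) (n (n x))]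
      _ = n ((n (x * (n x))) * (n (n ((n x) * (n (n x)))))) := by conv_lhs => enter [1, 2]; rw [← invol ((n x) * (n (n x)))]
      _ = n ((n x) * (n (n x))) := by conv_lhs => rw [g5eq x]
      _ = n ((n x) * (n (1 : M))) := by conv_lhs => rw [← d3 x]
  have dd2 : ∀ x : M, n ((n x) * (n (1 : M))) = n ((n (n x)) * (n (1 : M))) := by
    intro x
    calc n ((n x) * (n (1 : M)))
      _ = (n ((n x) * (n (1 : M)))) * (n ((n (n x)) * (n (1 : M)))) := by conv_lhs => rw [← ab_a x]
      _ = (n ((n (n x)) * (n (1 : M)))) * (n ((n x) * (n (1 : M)))) := by conv_lhs => rw [lucomm' x (n x)]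
      _ = (n ((n (n x)) * (n (1 : M)))) * (n ((n (n (n x))) * (n (1 : M)))) := by conv_lhs => enter [2, 1, 1]; rw [← invol (n x)]
      _ = n ((n (n x)) * (n (1 : M))) := by conv_lhs => rw [ab_a (n x)]
  have g4 : ∀ x : M, (n x) * (n (1 : M)) = x * (n (1 : M)) := by
    intro x
    calc (n x) * (n (1 : M))
      _ = n (n ((n x) * (n (1 : M)))) := by conv_lhs => rw [← invol ((n x) * (n (1 : M)))]
      _ = n (n ((n (n x)) * (n (1 : M)))) := by conv_lhs => enter [1]; rw [dd2 x]
      _ = n (n (x * (n (1 : M)))) := by conv_lhs => enter [1, 1, 1]; rw [invol x]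
      _ = x * (n (1 : M)) := by conv_lhs => rw [invol (x * (n (1 : M)))]
  have h5b : ∀ x : M, (n x) * x = x * (n (1 : M)) := by
    intro x
    calc (n x) * x
      _ = (n x) * (n (n x)) := by conv_lhs => enter [2]; rw [← invol x]
      _ = n (n ((n x) * (n (n x)))) := by conv_lhs => rw [← invol ((n x) * (n (n x)))]
      _ = n (n ((n x) * (n (1 : M)))) := by conv_lhs => enter [1]; rw [← d3 x]
      _ = (n x) * (n (1 : M)) := by conv_lhs => rw [invol ((n x) * (n (1 : M)))]
      _ = x * (n (1 : M)) := by conv_lhs => rw [g4 x]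
  have h5a : ∀ x : M, x * (n x) = x * (n (1 : M)) := by
    intro x
    calc x * (n x)
      _ = (n (n x)) * (n x) := by conv_lhs => enter [1]; rw [← invol x]
      _ = (n x) * (n (1 : M)) := by conv_lhs => rw [h5b (n x)]
      _ = x * (n (1 : M)) := by conv_lhs => rw [g4 x]
  have t2c : ∀ x : M, n ((n x) * (n (n ((n (x * (n (1 : M)))) * (n (1 : M)))))) = n ((n (x * (n (1 : M)))) * (n (1 : M))) := by
    intro x
    calc n ((n x) * (n (n ((n (x * (n (1 : M)))) * (n (1 : M))))))
      _ = n ((n x) * ((n (x * (n (1 : M)))) * (n (1 : M)))) := by conv_lhs => enter [1, 2]; rw [invol ((n (x * (n (1 : M)))) * (n (1 : M)))]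
      _ = n ((n x) * ((x * (n (1 : M))) * (n (1 : M)))) := by conv_lhs => enter [1, 2]; rw [g4 (x * (n (1 : M)))]
      _ = n ((n x) * (x * (n (1 : M)))) := by conv_lhs => enter [1, 2]; rw [lz x (n (1 : M))]
      _ = n ((n x) * ((n x) * (n (1 : M)))) := by conv_lhs => enter [1, 2]; rw [← g4 x]
      _ = n (((n x) * (n x)) * (n (1 : M))) := by conv_lhs => enter [1]; rw [← mul_assoc (n x) (n x) (n (1 : M))]
      _ = n ((n x) * (n (1 : M))) := by conv_lhs => enter [1, 1]; rw [idem (n x)]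
      _ = n (x * (n (1 : M))) := by conv_lhs => enter [1]; rw [g4 x]
      _ = n ((x * (n (1 : M))) * (n (1 : M))) := by conv_lhs => enter [1]; rw [← lz x (n (1 : M))]
      _ = n ((n (x * (n (1 : M)))) * (n (1 : M))) := by conv_lhs => enter [1]; rw [← g4 (x * (n (1 : M)))]
  -- uniqueness (part 3)
  have uniq : ∀ x j : M, j = j * n 1 →
      dadd n j x = x → dadd n x (dadd n j 1) = dadd n j 1 → j = x * n 1 := by
    intro x j hj h2 h3
    simp only [dadd] at h2 h3
    have hj0 : j * n 1 = j := hj.symm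
    have g4j : n j * n 1 = j := by rw [g4 j, hj0]
    have e : n (n j * n 1) = n j := by rw [g4j]
    rw [e] at h3
    -- h3 : n (n x * n (n j)) = n j
    have f1 : n x * j = j := by
      have h := congrArg n h3
      rw [invol, invol] at h
      exact h
    have P7 : x * j = x * n 1 := by
      calc x * j = x * (n x * j) := by rw [f1]
        _ = x * n x * j := by rw [mul_assoc]
        _ = x * n 1 * j := by rw [h5a x]
        _ = x * n 1 := lz x j
    have P8 : n (n j * n (x * n 1)) = x * n 1 := by
      have l := ldist' (n x) j x
      rw [h2, f1, h5b x] at l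
      exact l.symm
    have P9 : n (x * n 1) * j = x * n 1 := by
      have l := ldecomp' (n x) j
      rw [invol x, f1, P7, P8] at l
      exact l
    have key : n j = n (x * n 1) := by
      calc n j = n (n x * n (n j)) := h3.symm
        _ = n (n (n (n (x * n 1) * n x)) * n (n j)) := by
              conv_lhs => enter [1, 1, 1]; rw [← tpb x]
        _ = n (n (x * n 1) * n (n (n x * n (n j)))) := addassoc (x * n 1) x (n j)
        _ = n (n (x * n 1) * n (n j)) := by rw [h3]
        _ = n (n (x * n 1) * j) := by rw [invol j]
        _ = n (x * n 1) := by rw [P9]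
    have h := congrArg n key
    rw [invol, invol] at h
    exact h
  refine ⟨?_, ?_, uniq⟩
  · intro i x hi
    constructor
    · intro ⟨h1, h2⟩
      exact (uniq x i hi h1 h2).symm
    · intro h
      rw [← h]
      exact ⟨tpb x, t2c x⟩
  · intro x
    refine ⟨?_, tpb x, t2c x⟩
    rw [mul_assoc, lbdd]
end

section
/- Let I be a join-semilattice with least element ⊥. On the set I × Bool define: unit 1 := (⊥, true); involution (i, x)' := (i, ¬x); and multiplication (i, true)*(j, y) := (i ⊔ j, y) and (i, false)*(j, y) := (i, false). Then this structure is a McCarthy algebra: multiplication is associative and idempotent with two-sided unit 1, the involution satisfies z'' = z, and, with 0 := 1' and a + b := (a'*b')', the identities left-distributivity x*(y+z) = x*y + x*z, left-decomposition (x+1)*y = x*y + x'*y, left-boundedness 0*x = 0, and local-unit commutativity (x+1)*(y+1) = (y+1)*(x+1) all hold. -/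
/-- Multiplication on `I × Bool`: `(i, true)*(j, y) = (i ⊔ j, y)` and
`(i, false)*(j, y) = (i, false)`. -/
def mcMul {I : Type*} [SemilatticeSup I] (a b : I × Bool) : I × Bool :=
  if a.2 then (a.1 ⊔ b.1, b.2) else a

/-- The involution on `I × Bool`: `(i, x)' = (i, ¬x)`. -/
def mcInv {I : Type*} (a : I × Bool) : I × Bool := (a.1, !a.2)

/-- The unit: `1 = (⊥, true)`. -/
def mcOne {I : Type*} [SemilatticeSup I] [OrderBot I] : I × Bool := (⊥, true)

/-- The zero: `0 := 1'`. -/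
def mcZero {I : Type*} [SemilatticeSup I] [OrderBot I] : I × Bool := mcInv mcOne

/-- De Morgan dual addition: `a + b := (a' * b')'`. -/
def mcAdd {I : Type*} [SemilatticeSup I] (a b : I × Bool) : I × Bool :=
  mcInv (mcMul (mcInv a) (mcInv b))

/-- Let `I` be a join-semilattice with least element `⊥`. The structure on
`I × Bool` defined above is a McCarthy algebra: multiplication is associative
and idempotent with two-sided unit `1 = (⊥, true)`, the involution satisfies
`z'' = z`, and left-distributivity, left-decomposition, left-boundedness, and
local-unit commutativity all hold. -/
theorem stmt_18 {I : Type*} [SemilatticeSup I] [OrderBot I] :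
    (∀ a b c : I × Bool, mcMul (mcMul a b) c = mcMul a (mcMul b c)) ∧
    (∀ a : I × Bool, mcMul a a = a) ∧
    (∀ a : I × Bool, mcMul mcOne a = a) ∧
    (∀ a : I × Bool, mcMul a mcOne = a) ∧
    (∀ a : I × Bool, mcInv (mcInv a) = a) ∧
    (∀ x y z : I × Bool, mcMul x (mcAdd y z) = mcAdd (mcMul x y) (mcMul x z)) ∧
    (∀ x y : I × Bool,
      mcMul (mcAdd x mcOne) y = mcAdd (mcMul x y) (mcMul (mcInv x) y)) ∧
    (∀ x : I × Bool, mcMul mcZero x = mcZero) ∧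
    (∀ x y : I × Bool,
      mcMul (mcAdd x mcOne) (mcAdd y mcOne) =
        mcMul (mcAdd y mcOne) (mcAdd x mcOne)) := by
  refine ⟨?_, ?_, ?_, ?_, ?_, ?_, ?_, ?_, ?_⟩ <;>
    rintro ⟨i, (_|_)⟩ <;>
    first
      | (rintro ⟨j, (_|_)⟩ <;>
          first
            | (rintro ⟨k, (_|_)⟩ <;>
                simp [mcMul, mcInv, mcOne, mcZero, mcAdd, sup_assoc, sup_comm, sup_left_comm])
            | simp [mcMul, mcInv, mcOne, mcZero, mcAdd, sup_assoc, sup_comm, sup_left_comm])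
      | simp [mcMul, mcInv, mcOne, mcZero, mcAdd, sup_assoc, sup_comm, sup_left_comm]
end
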